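/- arXiv:2310.08461 — 4 statements merged into one kernel-verified Lean document; each statement's English description precedes it below -/
import Mathlib

section
/- Let Ω be a finite token vocabulary with a distinguished end-of-sequence token, and fix an input x and horizon T ≥ 1. Let p(·|x, y_{<t}) and q(·|x, y_{<t}) be the next-token distributions of a target model and a draft model, and let p_{≤T}(·|x), q_{≤T}(·|x) be the induced autoregressive distributions over output sequences (sampling stops when the end-of-sequence token is drawn or length reaches T; every generated sequence is nonempty). Define the sequence-level acceptance rate α(x) = 1 − E_{y∼p_{≤T}(·|x)}[ Σ_{t=1}^{|y|} D_TVD(p(·|x,y_{<t}), q(·|x,y_{<t})) ] / L_p(x), where L_p(x) = E_{y∼p_{≤T}(·|x)}[|y|], and the on-policy distillation loss ε(x) = E_{y∼q_{≤T}(·|x)}[ (1/|y|) Σ_{t=1}^{|y|} D_TVD(p(·|x,y_{<t}), q(·|x,y_{<t})) ]. Then for every input x, α(x) ≥ 1 − (2T²/L_p(x))·ε(x); consequently, for any distribution X over inputs, E_{x∼X}[α(x)] ≥ 1 − 2T·E_{x∼X}[(T/L_p(x))·ε(x)]. -/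
open Finset

/-- Total variation distance between two distributions on a finite set. -/
noncomputable def tvd {Ω : Type*} [Fintype Ω] (P Q : Ω → ℝ) : ℝ :=
  (1 / 2) * ∑ c, |P c - Q c|

/-- `IsDist P`: `P` is a probability distribution on the finite set `Ω`. -/
def IsDist {Ω : Type*} [Fintype Ω] (P : Ω → ℝ) : Prop :=
  (∀ c, 0 ≤ P c) ∧ ∑ c, P c = 1

/-- A next-token model: for every input `x` and every prefix, a next-token distribution. -/
def IsModel {Ω ι : Type*} [Fintype Ω] (p : ι → List Ω → Ω → ℝ) : Prop :=
  ∀ x pre, IsDist (p x pre)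

/-- `Stopped eos T y`: `y` is a completed output sequence for horizon `T`: it is nonempty,
has length at most `T`, contains the end-of-sequence token at no position except possibly
the last one, and either ends with `eos` or has length exactly `T`. -/
def Stopped {Ω : Type*} [DecidableEq Ω] (eos : Ω) (T : ℕ) (y : List Ω) : Prop :=
  y ≠ [] ∧ y.length ≤ T ∧ eos ∉ y.dropLast ∧ (y.getLast? = some eos ∨ y.length = T)

open Classical in
/-- Probability that autoregressive sampling — where the next-token distribution used to
sample the `(t+1)`-st token given the length-`t` prefix `pre` is `ms t pre`, with horizon `T`
and end-of-sequence token `eos` — outputs exactly the sequence `y`. -/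
noncomputable def seqProb {Ω : Type*} [Fintype Ω] [DecidableEq Ω] (eos : Ω)
    (ms : ℕ → List Ω → Ω → ℝ) (T : ℕ) (y : List Ω) : ℝ :=
  if Stopped eos T y then ∏ t ∈ Finset.range y.length, ms t (y.take t) (y.getD t eos) else 0

/-- Expectation of `f` under the induced distribution over output sequences. -/
noncomputable def seqExp {Ω : Type*} [Fintype Ω] [DecidableEq Ω] (eos : Ω)
    (ms : ℕ → List Ω → Ω → ℝ) (T : ℕ) (f : List Ω → ℝ) : ℝ :=
  ∑ n ∈ Finset.Icc 1 T, ∑ v : Fin n → Ω, seqProb eos ms T (List.ofFn v) * f (List.ofFn v)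

/-- Expectation under `p_{≤T}(·|x)`, the output-sequence distribution of the
autoregressive model with next-token distributions `p`. -/
noncomputable def modelExp {Ω ι : Type*} [Fintype Ω] [DecidableEq Ω] (eos : Ω)
    (p : ι → List Ω → Ω → ℝ) (x : ι) (T : ℕ) (f : List Ω → ℝ) : ℝ :=
  seqExp eos (fun _ pre => p x pre) T f

/-- Expectation under the mixed-model sequence distribution `M(x, ∅, z)`, where the letter
`z_t` (`true` = letter `P`, i.e. target model `p`; `false` = letter `Q`, i.e. draft model `q`)
selects the model used to sample the `t`-th token, with horizon `|z|` and empty prefix. -/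
noncomputable def mixExp {Ω ι : Type*} [Fintype Ω] [DecidableEq Ω] (eos : Ω)
    (p q : ι → List Ω → Ω → ℝ) (x : ι) (z : List Bool) (f : List Ω → ℝ) : ℝ :=
  seqExp eos (fun t pre => if z.getD t true then p x pre else q x pre) z.length f

/-- `Σ_{t=1}^{|y|} D_TVD(p(·|x, y_{<t}), q(·|x, y_{<t}))`. -/
noncomputable def totalLoss {Ω ι : Type*} [Fintype Ω] (p q : ι → List Ω → Ω → ℝ)
    (x : ι) (y : List Ω) : ℝ :=
  ∑ t ∈ Finset.range y.length, tvd (p x (y.take t)) (q x (y.take t))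

/-- `1{t ≤ |y|} · D_TVD(p(·|x, y_{<t}), q(·|x, y_{<t}))` for a (1-indexed) position `t`. -/
noncomputable def stepLoss {Ω ι : Type*} [Fintype Ω] (p q : ι → List Ω → Ω → ℝ)
    (x : ι) (t : ℕ) (y : List Ω) : ℝ :=
  if t ≤ y.length then tvd (p x (y.take (t - 1))) (q x (y.take (t - 1))) else 0

/-- Expected output length `L_p(x) = E_{y∼p_{≤T}(·|x)}[|y|]` of the target model. -/
noncomputable def Lp {Ω ι : Type*} [Fintype Ω] [DecidableEq Ω] (eos : Ω)
    (p : ι → List Ω → Ω → ℝ) (x : ι) (T : ℕ) : ℝ :=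
  modelExp eos p x T (fun y => (y.length : ℝ))

/-- Sequence-level acceptance rate
`α(x) = 1 − E_{y∼p_{≤T}(·|x)}[Σ_{t=1}^{|y|} D_TVD(p(·|x,y_{<t}), q(·|x,y_{<t}))] / L_p(x)`. -/
noncomputable def acceptRate {Ω ι : Type*} [Fintype Ω] [DecidableEq Ω] (eos : Ω)
    (p q : ι → List Ω → Ω → ℝ) (x : ι) (T : ℕ) : ℝ :=
  1 - modelExp eos p x T (totalLoss p q x) / Lp eos p x T

/-- On-policy distillation loss
`ε(x) = E_{y∼q_{≤T}(·|x)}[(1/|y|) Σ_{t=1}^{|y|} D_TVD(p(·|x,y_{<t}), q(·|x,y_{<t}))]`. -/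
noncomputable def onPolicyLoss {Ω ι : Type*} [Fintype Ω] [DecidableEq Ω] (eos : Ω)
    (p q : ι → List Ω → Ω → ℝ) (x : ι) (T : ℕ) : ℝ :=
  modelExp eos q x T (fun y => (1 / (y.length : ℝ)) * totalLoss p q x y)

/-- `A_t(x) = E_{y∼p_{≤T}(·|x)}[1{t ≤ |y|} · D_TVD(p(·|x,y_{<t}), q(·|x,y_{<t}))]`. -/
noncomputable def Aterm {Ω ι : Type*} [Fintype Ω] [DecidableEq Ω] (eos : Ω)
    (p q : ι → List Ω → Ω → ℝ) (x : ι) (T t : ℕ) : ℝ :=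
  modelExp eos p x T (stepLoss p q x t)

/-- `E_t(x) = E_{y∼q_{≤T}(·|x)}[1{t ≤ |y|} · D_TVD(p(·|x,y_{<t}), q(·|x,y_{<t}))]`. -/
noncomputable def Eterm {Ω ι : Type*} [Fintype Ω] [DecidableEq Ω] (eos : Ω)
    (p q : ι → List Ω → Ω → ℝ) (x : ι) (T t : ℕ) : ℝ :=
  modelExp eos q x T (stepLoss p q x t)

namespace DSpec
open Classical
set_option linter.unusedSectionVars false

variable {Ω : Type*} [Fintype Ω] [DecidableEq Ω] (eos : Ω)

def Ext (k n : ℕ) (w : Fin n → Ω) : Prop :=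
  eos ∉ (List.ofFn w).dropLast ∧ ((List.ofFn w).getLast? = some eos ∨ n = k)

noncomputable def wP (κ : List Ω → Ω → ℝ) (pre : List Ω) {n : ℕ} (w : Fin n → Ω) : ℝ :=
  ∏ t : Fin n, κ (pre ++ (List.ofFn w).take t) (w t)

noncomputable def S (κ : List Ω → Ω → ℝ) (k : ℕ) (pre : List Ω) (f : List Ω → ℝ) : ℝ :=
  ∑ n ∈ Icc 1 k, ∑ w : Fin n → Ω,
    (if Ext eos k n w then wP κ pre w else 0) * f (pre ++ List.ofFn w)

noncomputable def DS (a b : List Ω → Ω → ℝ) (k : ℕ) (pre : List Ω) : ℝ :=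
  (1/2) * ∑ n ∈ Icc 1 k, ∑ w : Fin n → Ω,
    (if Ext eos k n w then |wP a pre w - wP b pre w| else 0)

lemma peel (k : ℕ) (G : (n : ℕ) → (Fin n → Ω) → ℝ) :
    ∑ n ∈ Icc 1 (k+1), ∑ w : Fin n → Ω, G n w
      = (∑ c : Ω, G 1 (fun _ => c))
        + ∑ n ∈ Icc 1 k, ∑ c : Ω, ∑ w : Fin n → Ω, G (n+1) (Fin.cons c w) := by
  have h1 : Icc 1 (k+1) = insert 1 ((Icc 1 k).image (· + 1)) := by
    ext m
    simp only [mem_Icc, mem_insert, mem_image]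
    constructor
    · rintro ⟨h1, h2⟩
      rcases Nat.eq_or_lt_of_le h1 with h | h
      · exact Or.inl h.symm
      · exact Or.inr ⟨m - 1, ⟨by omega, by omega⟩, by omega⟩
    · rintro (rfl | ⟨a, ⟨ha1, ha2⟩, rfl⟩) <;> omega
  rw [h1, sum_insert (by simp), sum_image (fun a _ b _ h => by omega)]
  congr 1
  · rw [← (Equiv.funUnique (Fin 1) Ω).symm.sum_comp (fun w => G 1 w)]
    apply Fintype.sum_congr
    intro c
    rfl
  · apply sum_congr rfl
    intro n _
    rw [← (Fin.consEquiv (fun _ : Fin (n+1) => Ω)).sum_comp (fun w => G (n+1) w)]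
    rw [Fintype.sum_prod_type]
    rfl

lemma ofFn_const_one (c : Ω) : List.ofFn (fun _ : Fin 1 => c) = [c] := by simp

lemma Ext_one (k : ℕ) (w : Fin 1 → Ω) : Ext eos k 1 w ↔ (w 0 = eos ∨ 1 = k) := by
  have : List.ofFn w = [w 0] := by simp [List.ofFn_succ]
  simp [Ext, this]

lemma Ext_cons (k m : ℕ) (c : Ω) (w : Fin (m+1) → Ω) :
    Ext eos (k+1) (m+2) (Fin.cons c w) ↔ (c ≠ eos ∧ Ext eos k (m+1) w) := by
  have hne : List.ofFn w ≠ [] := by simp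
  have hofn : List.ofFn (Fin.cons c w) = c :: List.ofFn w := by
    simp [List.ofFn_succ]
  obtain ⟨hd, tl, hl⟩ : ∃ hd tl, List.ofFn w = hd :: tl := ⟨_, _, List.ofFn_succ⟩
  rw [Ext, hofn, List.dropLast_cons_of_ne_nil hne, hl, List.getLast?_cons_cons, ← hl]
  simp only [List.mem_cons, not_or, Ext]
  constructor
  · rintro ⟨⟨h1, h2⟩, h3 | h3⟩
    · exact ⟨fun h => h1 h.symm, h2, Or.inl h3⟩
    · exact ⟨fun h => h1 h.symm, h2, Or.inr (by omega)⟩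
  · rintro ⟨h1, h2, h3 | h3⟩
    · exact ⟨⟨fun h => h1 h.symm, h2⟩, Or.inl h3⟩
    · exact ⟨⟨fun h => h1 h.symm, h2⟩, Or.inr (by omega)⟩

lemma wP_one (κ : List Ω → Ω → ℝ) (pre : List Ω) (w : Fin 1 → Ω) :
    wP κ pre w = κ pre (w 0) := by
  simp [wP]

lemma wP_cons (κ : List Ω → Ω → ℝ) (pre : List Ω) {n : ℕ} (c : Ω) (w : Fin n → Ω) :
    wP κ pre (Fin.cons c w) = κ pre c * wP κ (pre ++ [c]) w := by
  rw [wP, Fin.prod_univ_succ]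
  congr 1
  · simp
  · apply Fintype.prod_congr
    intro t
    have hofn : List.ofFn (Fin.cons c w) = c :: List.ofFn w := by simp [List.ofFn_succ]
    rw [Fin.cons_succ, hofn]
    congr 1
    rw [Fin.val_succ, List.take_succ_cons, ← List.append_cons]

lemma ofFn_cons (c : Ω) {n : ℕ} (w : Fin n → Ω) :
    List.ofFn (Fin.cons c w) = c :: List.ofFn w := by simp [List.ofFn_succ]

lemma S_zero (κ : List Ω → Ω → ℝ) (pre : List Ω) (f : List Ω → ℝ) :
    S eos κ 0 pre f = 0 := by
  rw [S, Finset.Icc_eq_empty (by omega), sum_empty]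

lemma Srec (κ : List Ω → Ω → ℝ) (k : ℕ) (pre : List Ω) (f : List Ω → ℝ) :
    S eos κ (k+1) pre f
      = (∑ c : Ω, (if c = eos ∨ k = 0 then κ pre c else 0) * f (pre ++ [c]))
        + ∑ c : Ω, (if c = eos then 0 else κ pre c * S eos κ k (pre ++ [c]) f) := by
  rw [S, peel]
  congr 1
  · apply Fintype.sum_congr
    intro c
    have h1 : Ext eos (k+1) 1 (fun _ : Fin 1 => c) ↔ (c = eos ∨ k = 0) := by
      rw [Ext_one]; constructor <;> (rintro (h | h); exacts [Or.inl h, Or.inr (by omega)])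
    rw [ofFn_const_one]
    exact congrArg (· * f (pre ++ [c])) (if_congr h1 (wP_one κ pre _) rfl)
  · rw [sum_comm]
    apply Fintype.sum_congr
    intro c
    by_cases hc : c = eos
    · rw [if_pos hc]
      apply sum_eq_zero
      intro n hn
      apply sum_eq_zero
      intro w _
      obtain ⟨m, rfl⟩ : ∃ m, n = m + 1 := ⟨n - 1, by have := (mem_Icc.mp hn).1; omega⟩
      rw [if_neg, zero_mul]
      rw [Ext_cons]
      tauto
    · rw [if_neg hc, S, mul_sum]
      apply sum_congr rfl
      intro n hn
      obtain ⟨m, rfl⟩ : ∃ m, n = m + 1 := ⟨n - 1, by have := (mem_Icc.mp hn).1; omega⟩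
      rw [mul_sum]
      apply Fintype.sum_congr
      intro w
      rw [ofFn_cons, List.append_cons, wP_cons]
      rw [if_congr (Ext_cons eos k m c w) rfl rfl]
      by_cases hE : Ext eos k (m+1) w
      · rw [if_pos ⟨hc, hE⟩, if_pos hE]; ring
      · rw [if_neg (by tauto), if_neg hE]; ring

lemma S_mass (κ : List Ω → Ω → ℝ) (hκ : ∀ pre, IsDist (κ pre)) :
    ∀ (k : ℕ) (pre : List Ω), S eos κ (k+1) pre (fun _ => 1) = 1 := by
  intro k
  induction k with
  | zero =>
    intro pre
    rw [Srec, ← sum_add_distrib]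
    have : ∀ c : Ω, (if c = eos ∨ 0 = 0 then κ pre c else 0) * 1
        + (if c = eos then 0 else κ pre c * S eos κ 0 (pre ++ [c]) (fun _ => 1)) = κ pre c := by
      intro c
      rw [if_pos (Or.inr rfl), S_zero]
      split_ifs <;> simp
    rw [Fintype.sum_congr _ _ this]
    exact (hκ pre).2
  | succ m ih =>
    intro pre
    rw [Srec]
    rw [← sum_add_distrib]
    have : ∀ c : Ω, (if c = eos ∨ m + 1 = 0 then κ pre c else 0) * 1
        + (if c = eos then 0 else κ pre c * S eos κ (m+1) (pre ++ [c]) (fun _ => 1))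
        = κ pre c := by
      intro c
      by_cases hc : c = eos
      · simp [hc]
      · rw [if_neg (by simp [hc]), if_neg hc, ih]; simp
    rw [Fintype.sum_congr _ _ this]
    exact (hκ pre).2

lemma wP_nonneg (κ : List Ω → Ω → ℝ) (hκ : ∀ pre c, 0 ≤ κ pre c) (pre : List Ω)
    {n : ℕ} (w : Fin n → Ω) : 0 ≤ wP κ pre w :=
  Finset.prod_nonneg fun t _ => hκ _ _

lemma ite_wP_nonneg (κ : List Ω → Ω → ℝ) (hκ : ∀ pre c, 0 ≤ κ pre c) (pre : List Ω)
    {k n : ℕ} (w : Fin n → Ω) : 0 ≤ (if Ext eos k n w then wP κ pre w else 0) := by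
  split_ifs
  · exact wP_nonneg κ hκ pre w
  · exact le_rfl

lemma S_nonneg (κ : List Ω → Ω → ℝ) (hκ : ∀ pre c, 0 ≤ κ pre c) (k : ℕ) (pre : List Ω)
    {f : List Ω → ℝ} (hf : ∀ y, 0 ≤ f y) : 0 ≤ S eos κ k pre f := by
  apply sum_nonneg; intro n _
  apply sum_nonneg; intro w _
  exact mul_nonneg (ite_wP_nonneg eos κ hκ pre w) (hf _)

lemma S_mono (κ : List Ω → Ω → ℝ) (hκ : ∀ pre c, 0 ≤ κ pre c) (k : ℕ) (pre : List Ω)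
    {f g : List Ω → ℝ}
    (h : ∀ y, 1 ≤ y.length → y.length ≤ pre.length + k → f y ≤ g y) :
    S eos κ k pre f ≤ S eos κ k pre g := by
  apply sum_le_sum; intro n hn
  apply sum_le_sum; intro w _
  apply mul_le_mul_of_nonneg_left _ (ite_wP_nonneg eos κ hκ pre w)
  have hn' := mem_Icc.mp hn
  apply h <;> simp <;> omega

lemma S_congr (κ : List Ω → Ω → ℝ) (k : ℕ) (pre : List Ω) {f g : List Ω → ℝ}
    (h : ∀ y, y.take pre.length = pre → 1 ≤ y.length - pre.length →
      y.length - pre.length ≤ k → f y = g y) :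
    S eos κ k pre f = S eos κ k pre g := by
  apply sum_congr rfl; intro n hn
  apply Fintype.sum_congr; intro w
  have hn' := mem_Icc.mp hn
  congr 1
  apply h
  · rw [List.take_left]
  · simp; omega
  · simp; omega

lemma S_add (κ : List Ω → Ω → ℝ) (k : ℕ) (pre : List Ω) (f g : List Ω → ℝ) :
    S eos κ k pre (fun y => f y + g y) = S eos κ k pre f + S eos κ k pre g := by
  simp [S, mul_add, sum_add_distrib]

lemma S_smul (κ : List Ω → Ω → ℝ) (k : ℕ) (pre : List Ω) (r : ℝ) (f : List Ω → ℝ) :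
    S eos κ k pre (fun y => r * f y) = r * S eos κ k pre f := by
  simp [S, mul_sum]
  apply sum_congr rfl; intro n _
  apply Fintype.sum_congr; intro w
  ring

lemma S_const (κ : List Ω → Ω → ℝ) (hκ : ∀ pre, IsDist (κ pre)) (k : ℕ) (pre : List Ω)
    (r : ℝ) : S eos κ (k+1) pre (fun _ => r) = r := by
  have : (fun _ : List Ω => r) = fun y => r * (fun _ : List Ω => 1) y := by funext; ring
  rw [this, S_smul, S_mass eos κ hκ, mul_one]

lemma tvd_nonneg {P Q : Ω → ℝ} : 0 ≤ tvd P Q := by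
  apply mul_nonneg (by norm_num)
  exact sum_nonneg fun c _ => abs_nonneg _

lemma tvd_le_one {P Q : Ω → ℝ} (hP : IsDist P) (hQ : IsDist Q) : tvd P Q ≤ 1 := by
  rw [tvd]
  have : ∑ c, |P c - Q c| ≤ ∑ c, (P c + Q c) := by
    apply sum_le_sum; intro c _
    calc |P c - Q c| ≤ |P c| + |Q c| := abs_sub _ _
    _ = P c + Q c := by rw [abs_of_nonneg (hP.1 c), abs_of_nonneg (hQ.1 c)]
  calc (1/2 : ℝ) * ∑ c, |P c - Q c| ≤ (1/2) * ∑ c, (P c + Q c) := by linarith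
  _ = 1 := by rw [sum_add_distrib, hP.2, hQ.2]; norm_num

lemma DS_zero (a b : List Ω → Ω → ℝ) (pre : List Ω) : DS eos a b 0 pre = 0 := by
  rw [DS, Finset.Icc_eq_empty (by omega), sum_empty, mul_zero]

lemma gather (k : ℕ) (Φ : Ω → (n : ℕ) → (Fin n → Ω) → ℝ) :
    ∑ n ∈ Icc 1 k, ∑ c : Ω, ∑ w : Fin n → Ω, (if c ≠ eos ∧ Ext eos k n w then Φ c n w else 0)
      = ∑ c : Ω, (if c = eos then 0
          else ∑ n ∈ Icc 1 k, ∑ w : Fin n → Ω, (if Ext eos k n w then Φ c n w else 0)) := by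
  rw [sum_comm]
  apply Fintype.sum_congr; intro c
  by_cases hc : c = eos
  · rw [if_pos hc]
    apply sum_eq_zero; intro n _
    apply sum_eq_zero; intro w _
    rw [if_neg]; tauto
  · rw [if_neg hc]
    apply sum_congr rfl; intro n _
    apply Fintype.sum_congr; intro w
    by_cases hE : Ext eos k n w
    · rw [if_pos ⟨hc, hE⟩, if_pos hE]
    · rw [if_neg (by tauto), if_neg hE]

lemma sum_ite_wP (κ : List Ω → Ω → ℝ) (k : ℕ) (pre : List Ω) (r : ℝ) :
    ∑ n ∈ Icc 1 k, ∑ w : Fin n → Ω, (if Ext eos k n w then r * wP κ pre w else 0)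
      = r * S eos κ k pre (fun _ => 1) := by
  rw [S, mul_sum]
  apply sum_congr rfl; intro n _
  rw [mul_sum]
  apply Fintype.sum_congr; intro w
  split_ifs <;> ring

lemma sum_ite_abs (a b : List Ω → Ω → ℝ) (k : ℕ) (pre : List Ω) (r : ℝ) :
    ∑ n ∈ Icc 1 k, ∑ w : Fin n → Ω, (if Ext eos k n w then r * |wP a pre w - wP b pre w| else 0)
      = r * (2 * DS eos a b k pre) := by
  rw [DS]
  rw [show r * (2 * ((1/2) * ∑ n ∈ Icc 1 k, ∑ w : Fin n → Ω,
      (if Ext eos k n w then |wP a pre w - wP b pre w| else 0)))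
    = r * ∑ n ∈ Icc 1 k, ∑ w : Fin n → Ω,
      (if Ext eos k n w then |wP a pre w - wP b pre w| else 0) from by ring]
  rw [mul_sum]
  apply sum_congr rfl; intro n _
  rw [mul_sum]
  apply Fintype.sum_congr; intro w
  split_ifs <;> ring

lemma g_single (a b : List Ω → Ω → ℝ) (pre : List Ω) (c : Ω) :
    ∑ t ∈ Finset.Ico pre.length (pre ++ [c]).length,
        tvd (a ((pre ++ [c]).take t)) (b ((pre ++ [c]).take t))
      = tvd (a pre) (b pre) := by
  have h1 : (pre ++ [c]).length = pre.length + 1 := by simp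
  rw [h1, Nat.Ico_succ_singleton, Finset.sum_singleton,
    List.take_append_of_le_length (le_refl _), List.take_length]

lemma DS_le (a b : List Ω → Ω → ℝ) (ha : ∀ pre, IsDist (a pre)) (hb : ∀ pre, IsDist (b pre)) :
    ∀ (k : ℕ) (pre : List Ω), DS eos a b k pre ≤
      S eos b k pre
        (fun y => ∑ t ∈ Finset.Ico pre.length y.length, tvd (a (y.take t)) (b (y.take t))) := by
  intro k
  induction k with
  | zero => intro pre; rw [DS_zero, S_zero]
  | succ k ih =>
    intro pre
    set τ := tvd (a pre) (b pre) with hτ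
    set g : List Ω → ℝ :=
      fun y => ∑ t ∈ Finset.Ico pre.length y.length, tvd (a (y.take t)) (b (y.take t)) with hg
    -- peel the LHS
    have hL : DS eos a b (k+1) pre
        = (1/2) * ((∑ c : Ω, (if c = eos ∨ k = 0 then |a pre c - b pre c| else 0))
          + ∑ n ∈ Icc 1 k, ∑ c : Ω, ∑ w : Fin n → Ω,
            (if c ≠ eos ∧ Ext eos k n w
              then |a pre c * wP a (pre ++ [c]) w - b pre c * wP b (pre ++ [c]) w| else 0)) := by
      rw [DS, peel]
      congr 2
      · apply Fintype.sum_congr; intro c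
        have h1 : Ext eos (k+1) 1 (fun _ : Fin 1 => c) ↔ (c = eos ∨ k = 0) := by
          rw [Ext_one]
          constructor <;> (rintro (h | h); exacts [Or.inl h, Or.inr (by omega)])
        exact if_congr h1 (by rw [wP_one, wP_one]) rfl
      · apply sum_congr rfl; intro n hn
        obtain ⟨m, rfl⟩ : ∃ m, n = m + 1 := ⟨n - 1, by have := (mem_Icc.mp hn).1; omega⟩
        apply Fintype.sum_congr; intro c
        apply Fintype.sum_congr; intro w
        exact if_congr (Ext_cons eos k m c w) (by rw [wP_cons, wP_cons]) rfl
    -- termwise bound on the second part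
    have hG : ∑ n ∈ Icc 1 k, ∑ c : Ω, ∑ w : Fin n → Ω,
          (if c ≠ eos ∧ Ext eos k n w
            then |a pre c * wP a (pre ++ [c]) w - b pre c * wP b (pre ++ [c]) w| else 0)
        ≤ (∑ n ∈ Icc 1 k, ∑ c : Ω, ∑ w : Fin n → Ω,
            (if c ≠ eos ∧ Ext eos k n w then |a pre c - b pre c| * wP a (pre ++ [c]) w else 0))
          + ∑ n ∈ Icc 1 k, ∑ c : Ω, ∑ w : Fin n → Ω,
            (if c ≠ eos ∧ Ext eos k n w
              then b pre c * |wP a (pre ++ [c]) w - wP b (pre ++ [c]) w| else 0) := by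
      rw [← sum_add_distrib]
      apply sum_le_sum; intro n _
      rw [← sum_add_distrib]
      apply sum_le_sum; intro c _
      rw [← sum_add_distrib]
      apply sum_le_sum; intro w _
      by_cases h : c ≠ eos ∧ Ext eos k n w
      · rw [if_pos h, if_pos h, if_pos h]
        have hA : 0 ≤ wP a (pre ++ [c]) w := wP_nonneg a (fun p d => (ha p).1 d) _ w
        have hb0 : 0 ≤ b pre c := (hb pre).1 c
        calc |a pre c * wP a (pre ++ [c]) w - b pre c * wP b (pre ++ [c]) w|
            = |(a pre c - b pre c) * wP a (pre ++ [c]) w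
              + b pre c * (wP a (pre ++ [c]) w - wP b (pre ++ [c]) w)| := by ring_nf
          _ ≤ |(a pre c - b pre c) * wP a (pre ++ [c]) w|
              + |b pre c * (wP a (pre ++ [c]) w - wP b (pre ++ [c]) w)| := abs_add_le _ _
          _ = |a pre c - b pre c| * wP a (pre ++ [c]) w
              + b pre c * |wP a (pre ++ [c]) w - wP b (pre ++ [c]) w| := by
            rw [abs_mul, abs_mul, abs_of_nonneg hA, abs_of_nonneg hb0]
      · rw [if_neg h, if_neg h, if_neg h]; norm_num
    rcases Nat.eq_zero_or_pos k with hk0 | hkpos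
    · -- k = 0
      subst hk0
      rw [hL]
      have h2 : ∑ n ∈ Icc 1 0, ∑ c : Ω, ∑ w : Fin n → Ω,
          (if c ≠ eos ∧ Ext eos 0 n w
            then |a pre c * wP a (pre ++ [c]) w - b pre c * wP b (pre ++ [c]) w| else 0) = 0 := by
        rw [Finset.Icc_eq_empty (by omega), sum_empty]
      rw [h2, add_zero]
      have hF : (∑ c : Ω, if c = eos ∨ (0:ℕ) = 0 then |a pre c - b pre c| else 0)
          = ∑ c : Ω, |a pre c - b pre c| := by
        apply Fintype.sum_congr; intro c; rw [if_pos (Or.inr rfl)]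
      rw [hF, Srec]
      have hcomb : ∀ c : Ω, (if c = eos ∨ (0:ℕ) = 0 then b pre c else 0) * g (pre ++ [c])
          + (if c = eos then 0 else b pre c * S eos b 0 (pre ++ [c]) g) = b pre c * τ := by
        intro c
        have hgc : g (pre ++ [c]) = τ := g_single a b pre c
        rw [if_pos (Or.inr rfl), S_zero, hgc]
        split_ifs <;> ring
      rw [← sum_add_distrib, Fintype.sum_congr _ _ hcomb, ← sum_mul, (hb pre).2, one_mul]
      exact le_of_eq (by rw [hτ, tvd])
    · -- k = m + 1
      obtain ⟨m, rfl⟩ : ∃ m, k = m + 1 := ⟨k - 1, by omega⟩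
      set S' : Ω → ℝ := fun c => S eos b (m+1) (pre ++ [c])
        (fun y => ∑ t ∈ Finset.Ico (pre ++ [c]).length y.length,
          tvd (a (y.take t)) (b (y.take t))) with hS'
      have hX : ∑ n ∈ Icc 1 (m+1), ∑ c : Ω, ∑ w : Fin n → Ω,
            (if c ≠ eos ∧ Ext eos (m+1) n w
              then |a pre c - b pre c| * wP a (pre ++ [c]) w else 0)
          = ∑ c : Ω, (if c = eos then 0 else |a pre c - b pre c|) := by
        rw [gather]
        apply Fintype.sum_congr; intro c
        by_cases hc : c = eos
        · rw [if_pos hc, if_pos hc]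
        · rw [if_neg hc, if_neg hc, sum_ite_wP, S_mass eos a ha, mul_one]
      have hY : ∑ n ∈ Icc 1 (m+1), ∑ c : Ω, ∑ w : Fin n → Ω,
            (if c ≠ eos ∧ Ext eos (m+1) n w
              then b pre c * |wP a (pre ++ [c]) w - wP b (pre ++ [c]) w| else 0)
          = ∑ c : Ω, (if c = eos then 0
              else b pre c * (2 * DS eos a b (m+1) (pre ++ [c]))) := by
        rw [gather]
        apply Fintype.sum_congr; intro c
        by_cases hc : c = eos
        · rw [if_pos hc, if_pos hc]
        · rw [if_neg hc, if_neg hc, sum_ite_abs]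
      -- compute the RHS
      have hinner : ∀ c : Ω, S eos b (m+1) (pre ++ [c]) g = τ + S' c := by
        intro c
        have hstep : ∀ y : List Ω, y.take (pre ++ [c]).length = pre ++ [c] →
            1 ≤ y.length - (pre ++ [c]).length → y.length - (pre ++ [c]).length ≤ m + 1 →
            g y = τ + ∑ t ∈ Finset.Ico (pre ++ [c]).length y.length,
              tvd (a (y.take t)) (b (y.take t)) := by
          intro y hy hy1 hy2
          have hlen : (pre ++ [c]).length = pre.length + 1 := by simp
          have hyl : pre.length + 1 ≤ y.length := by
            have := congrArg List.length hy
            rw [List.length_take, hlen] at this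
            omega
          have hlt : pre.length < y.length := by omega
          have htk : y.take pre.length = pre := by
            have h3 : (y.take (pre.length + 1)).take pre.length = pre := by
              rw [← hlen, hy]
              rw [List.take_append_of_le_length (le_refl _), List.take_length]
            rw [List.take_take, Nat.min_eq_left (by omega)] at h3
            exact h3
          simp only [hg]
          rw [Finset.sum_eq_sum_Ico_succ_bot hlt, htk, hlen, hτ]
        rw [S_congr eos b (m+1) (pre ++ [c]) hstep]
        have h4 := S_add eos b (m+1) (pre ++ [c]) (fun _ => τ)
          (fun y => ∑ t ∈ Finset.Ico (pre ++ [c]).length y.length,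
            tvd (a (y.take t)) (b (y.take t)))
        rw [h4, S_const eos b hb m (pre ++ [c]) τ, hS']
      have hRHS : S eos b (m+1+1) pre g = τ + ∑ c : Ω,
          (if c = eos then 0 else b pre c * S' c) := by
        rw [Srec]
        have hcomb : ∀ c : Ω, (if c = eos ∨ m + 1 = 0 then b pre c else 0) * g (pre ++ [c])
            + (if c = eos then 0 else b pre c * S eos b (m+1) (pre ++ [c]) g)
            = b pre c * τ + (if c = eos then 0 else b pre c * S' c) := by
          intro c
          have hgc : g (pre ++ [c]) = τ := g_single a b pre c
          rw [hgc]
          by_cases hc : c = eos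
          · rw [if_pos (Or.inl hc), if_pos hc, if_pos hc]
          · rw [if_neg (by simp [hc]), if_neg hc, if_neg hc, hinner c]; ring
        rw [← sum_add_distrib, Fintype.sum_congr _ _ hcomb, sum_add_distrib, ← sum_mul,
          (hb pre).2, one_mul]
      -- assemble
      rw [hL, hRHS]
      have step1 : (1/2 : ℝ) * ((∑ c : Ω, (if c = eos ∨ m + 1 = 0 then |a pre c - b pre c| else 0))
          + ∑ n ∈ Icc 1 (m+1), ∑ c : Ω, ∑ w : Fin n → Ω,
            (if c ≠ eos ∧ Ext eos (m+1) n w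
              then |a pre c * wP a (pre ++ [c]) w - b pre c * wP b (pre ++ [c]) w| else 0))
          ≤ (1/2 : ℝ) * ((∑ c : Ω, (if c = eos ∨ m + 1 = 0 then |a pre c - b pre c| else 0))
            + ((∑ c : Ω, (if c = eos then 0 else |a pre c - b pre c|))
              + ∑ c : Ω, (if c = eos then 0
                  else b pre c * (2 * DS eos a b (m+1) (pre ++ [c]))))) := by
        rw [← hX, ← hY]
        have := hG
        linarith
      apply le_trans step1
      have hFX : (∑ c : Ω, (if c = eos ∨ m + 1 = 0 then |a pre c - b pre c| else 0))
          + (∑ c : Ω, (if c = eos then 0 else |a pre c - b pre c|)) = 2 * τ := by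
        rw [← sum_add_distrib]
        have : ∀ c : Ω, (if c = eos ∨ m + 1 = 0 then |a pre c - b pre c| else 0)
            + (if c = eos then 0 else |a pre c - b pre c|) = |a pre c - b pre c| := by
          intro c
          by_cases hc : c = eos
          · rw [if_pos (Or.inl hc), if_pos hc, add_zero]
          · rw [if_neg (by simp [hc]), if_neg hc, zero_add]
        rw [Fintype.sum_congr _ _ this, hτ, tvd]
        ring
      have step2 : ∀ c : Ω, (if c = eos then 0
            else b pre c * (2 * DS eos a b (m+1) (pre ++ [c])))
          ≤ (if c = eos then 0 else b pre c * (2 * S' c)) := by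
        intro c
        by_cases hc : c = eos
        · rw [if_pos hc, if_pos hc]
        · rw [if_neg hc, if_neg hc]
          apply mul_le_mul_of_nonneg_left _ ((hb pre).1 c)
          have := ih (pre ++ [c])
          rw [hS']
          linarith
      have step3 : ∑ c : Ω, (if c = eos then 0
            else b pre c * (2 * DS eos a b (m+1) (pre ++ [c])))
          ≤ ∑ c : Ω, (if c = eos then 0 else b pre c * (2 * S' c)) :=
        sum_le_sum fun c _ => step2 c
      have heq : ∑ c : Ω, (if c = eos then 0 else b pre c * (2 * S' c))
          = 2 * ∑ c : Ω, (if c = eos then 0 else b pre c * S' c) := by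
        rw [mul_sum]
        apply Fintype.sum_congr; intro c
        split_ifs <;> ring
      rw [heq] at step3
      linarith [hFX, step3]

end DSpec
namespace DSpec
open Classical

variable {Ω : Type*} [Fintype Ω] [DecidableEq Ω] (eos : Ω)

lemma seqExp_eq_S (κ : List Ω → Ω → ℝ) (T : ℕ) (f : List Ω → ℝ) :
    seqExp eos (fun _ pre => κ pre) T f = S eos κ T [] f := by
  rw [seqExp, S]
  apply sum_congr rfl; intro n hn
  have hn' := mem_Icc.mp hn
  apply Fintype.sum_congr; intro w
  rw [List.nil_append]
  congr 1
  rw [seqProb]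
  have hlen : (List.ofFn w).length = n := List.length_ofFn
  have hiff : Stopped eos T (List.ofFn w) ↔ Ext eos T n w := by
    rw [Stopped, Ext]
    have hne : List.ofFn w ≠ [] := by
      intro h
      have := congrArg List.length h
      rw [hlen] at this
      simp at this
      omega
    constructor
    · rintro ⟨-, -, h3, h4⟩
      exact ⟨h3, by rwa [hlen] at h4⟩
    · rintro ⟨h3, h4⟩
      exact ⟨hne, by rw [hlen]; exact hn'.2, h3, by rwa [hlen]⟩
  have hprod : (∏ t ∈ Finset.range (List.ofFn w).length,
        κ ((List.ofFn w).take t) ((List.ofFn w).getD t eos)) = wP κ [] w := by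
    rw [wP, hlen, ← Fin.prod_univ_eq_prod_range
      (fun t => κ ((List.ofFn w).take t) ((List.ofFn w).getD t eos)) n]
    apply Fintype.prod_congr; intro t
    rw [List.nil_append]
    congr 1
    rw [List.getD_eq_getElem _ _ (by rw [hlen]; exact t.isLt), List.getElem_ofFn]
  exact if_congr hiff hprod rfl

lemma S_diff_le (a b : List Ω → Ω → ℝ) (ha : ∀ pre, IsDist (a pre))
    (hb : ∀ pre, IsDist (b pre)) (k : ℕ) (M : ℝ) (f : List Ω → ℝ)
    (hf : ∀ y : List Ω, 1 ≤ y.length → y.length ≤ k + 1 → |f y - M/2| ≤ M/2) :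
    S eos a (k+1) [] f ≤ S eos b (k+1) [] f + M * DS eos a b (k+1) [] := by
  have hPa : ∑ n ∈ Icc 1 (k+1), ∑ w : Fin n → Ω,
      (if Ext eos (k+1) n w then wP a [] w else 0) = 1 := by
    have := S_mass eos a ha k []
    rw [S] at this
    simpa using this
  have hPb : ∑ n ∈ Icc 1 (k+1), ∑ w : Fin n → Ω,
      (if Ext eos (k+1) n w then wP b [] w else 0) = 1 := by
    have := S_mass eos b hb k []
    rw [S] at this
    simpa using this
  have hterm : ∀ n ∈ Icc 1 (k+1), ∀ w : Fin n → Ω,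
      (if Ext eos (k+1) n w then wP a [] w else 0) * f (List.ofFn w)
        ≤ (if Ext eos (k+1) n w then wP b [] w else 0) * f (List.ofFn w)
          + (M/2) * (if Ext eos (k+1) n w then |wP a [] w - wP b [] w| else 0)
          + (M/2) * ((if Ext eos (k+1) n w then wP a [] w else 0)
              - (if Ext eos (k+1) n w then wP b [] w else 0)) := by
    intro n hn w
    have hn' := mem_Icc.mp hn
    by_cases hE : Ext eos (k+1) n w
    · simp only [if_pos hE]
      have hfb : |f (List.ofFn w) - M/2| ≤ M/2 := by
        apply hf
        · rw [List.length_ofFn]; exact hn'.1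
        · rw [List.length_ofFn]; exact hn'.2
      have h1 : (wP a [] w - wP b [] w) * (f (List.ofFn w) - M/2)
          ≤ |wP a [] w - wP b [] w| * (M/2) := by
        calc (wP a [] w - wP b [] w) * (f (List.ofFn w) - M/2)
            ≤ |(wP a [] w - wP b [] w) * (f (List.ofFn w) - M/2)| := le_abs_self _
          _ = |wP a [] w - wP b [] w| * |f (List.ofFn w) - M/2| := abs_mul _ _
          _ ≤ |wP a [] w - wP b [] w| * (M/2) :=
            mul_le_mul_of_nonneg_left hfb (abs_nonneg _)
      nlinarith [h1]
    · simp only [if_neg hE]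
      norm_num
  have hsum : S eos a (k+1) [] f ≤ S eos b (k+1) [] f
      + (∑ n ∈ Icc 1 (k+1), ∑ w : Fin n → Ω,
          ((M/2) * (if Ext eos (k+1) n w then |wP a [] w - wP b [] w| else 0)))
      + (∑ n ∈ Icc 1 (k+1), ∑ w : Fin n → Ω,
          ((M/2) * ((if Ext eos (k+1) n w then wP a [] w else 0)
            - (if Ext eos (k+1) n w then wP b [] w else 0)))) := by
    rw [S, S, ← sum_add_distrib, ← sum_add_distrib]
    apply sum_le_sum; intro n hn
    rw [← sum_add_distrib, ← sum_add_distrib]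
    apply sum_le_sum; intro w _
    simp only [List.nil_append]
    exact hterm n hn w
  have hD : (∑ n ∈ Icc 1 (k+1), ∑ w : Fin n → Ω,
      ((M/2) * (if Ext eos (k+1) n w then |wP a [] w - wP b [] w| else 0)))
      = M * DS eos a b (k+1) [] := by
    calc (∑ n ∈ Icc 1 (k+1), ∑ w : Fin n → Ω,
        ((M/2) * (if Ext eos (k+1) n w then |wP a [] w - wP b [] w| else 0)))
        = ∑ n ∈ Icc 1 (k+1), (M/2) * ∑ w : Fin n → Ω,
          (if Ext eos (k+1) n w then |wP a [] w - wP b [] w| else 0) := by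
          apply sum_congr rfl; intro n _
          rw [mul_sum]
      _ = (M/2) * ∑ n ∈ Icc 1 (k+1), ∑ w : Fin n → Ω,
          (if Ext eos (k+1) n w then |wP a [] w - wP b [] w| else 0) := by rw [← mul_sum]
      _ = M * ((1/2) * ∑ n ∈ Icc 1 (k+1), ∑ w : Fin n → Ω,
          (if Ext eos (k+1) n w then |wP a [] w - wP b [] w| else 0)) := by ring
      _ = M * DS eos a b (k+1) [] := by rw [DS]
  have hZ : (∑ n ∈ Icc 1 (k+1), ∑ w : Fin n → Ω,
      ((M/2) * ((if Ext eos (k+1) n w then wP a [] w else 0)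
        - (if Ext eos (k+1) n w then wP b [] w else 0)))) = 0 := by
    have : ∀ n ∈ Icc 1 (k+1), ∑ w : Fin n → Ω,
        ((M/2) * ((if Ext eos (k+1) n w then wP a [] w else 0)
          - (if Ext eos (k+1) n w then wP b [] w else 0)))
        = (M/2) * ((∑ w : Fin n → Ω, (if Ext eos (k+1) n w then wP a [] w else 0))
          - ∑ w : Fin n → Ω, (if Ext eos (k+1) n w then wP b [] w else 0)) := by
      intro n _
      rw [mul_sub, mul_sum, mul_sum, ← sum_sub_distrib]
      apply Fintype.sum_congr; intro w; ring
    rw [sum_congr rfl this, ← mul_sum, sum_sub_distrib, hPa, hPb]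
    ring
  rw [hD, hZ, add_zero] at hsum
  exact hsum

end DSpec

open DSpec in
/-- **DistillSpec, Theorem 1.** For every input `x`,
`α(x) ≥ 1 − (2T²/L_p(x))·ε(x)`; consequently, for any distribution `w` over inputs,
`E_{x∼X}[α(x)] ≥ 1 − 2T · E_{x∼X}[(T/L_p(x))·ε(x)]`. -/
theorem acceptance_rate_lower_bound
    {Ω ι : Type*} [Fintype Ω] [DecidableEq Ω] [Fintype ι] (eos : Ω)
    (T : ℕ) (hT : 1 ≤ T)
    (p q : ι → List Ω → Ω → ℝ) (hp : IsModel p) (hq : IsModel q)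
    (w : ι → ℝ) (hw0 : ∀ x, 0 ≤ w x) (hw1 : ∑ x, w x = 1) :
    (∀ x : ι, acceptRate eos p q x T ≥
        1 - (2 * (T : ℝ) ^ 2 / Lp eos p x T) * onPolicyLoss eos p q x T) ∧
    ∑ x, w x * acceptRate eos p q x T ≥
        1 - 2 * (T : ℝ) * ∑ x, w x * (((T : ℝ) / Lp eos p x T) * onPolicyLoss eos p q x T) := by
  obtain ⟨k, rfl⟩ : ∃ k, T = k + 1 := ⟨T - 1, by omega⟩
  have hTR : (1:ℝ) ≤ ((k:ℝ) + 1) := by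
    have : (0:ℝ) ≤ (k:ℝ) := Nat.cast_nonneg k
    linarith
  have part1 : ∀ x : ι, acceptRate eos p q x (k+1) ≥
      1 - (2 * ((k+1 : ℕ) : ℝ) ^ 2 / Lp eos p x (k+1)) * onPolicyLoss eos p q x (k+1) := by
    intro x
    have hax := hp x
    have hbx := hq x
    have ha0 : ∀ pre c, 0 ≤ p x pre c := fun pre c => (hax pre).1 c
    have hb0 : ∀ pre c, 0 ≤ q x pre c := fun pre c => (hbx pre).1 c
    -- rewrite everything through S
    have hnum : modelExp eos p x (k+1) (totalLoss p q x)
        = S eos (p x) (k+1) [] (totalLoss p q x) := by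
      rw [modelExp]; exact seqExp_eq_S eos (p x) (k+1) _
    have hLpS : Lp eos p x (k+1)
        = S eos (p x) (k+1) [] (fun y => (y.length : ℝ)) := by
      rw [Lp, modelExp]; exact seqExp_eq_S eos (p x) (k+1) _
    have hepsS : onPolicyLoss eos p q x (k+1)
        = S eos (q x) (k+1) [] (fun y => (1 / (y.length : ℝ)) * totalLoss p q x y) := by
      rw [onPolicyLoss, modelExp]; exact seqExp_eq_S eos (q x) (k+1) _
    set num := S eos (p x) (k+1) [] (totalLoss p q x) with hnumdef
    set E := S eos (q x) (k+1) [] (totalLoss p q x) with hEdef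
    set eps := S eos (q x) (k+1) [] (fun y => (1 / (y.length : ℝ)) * totalLoss p q x y)
      with hepsdef
    -- pointwise facts about totalLoss
    have htv0 : ∀ y : List Ω, 0 ≤ totalLoss p q x y := by
      intro y
      exact sum_nonneg fun t _ => tvd_nonneg
    have htvlen : ∀ y : List Ω, totalLoss p q x y ≤ (y.length : ℝ) := by
      intro y
      calc totalLoss p q x y ≤ ∑ _t ∈ Finset.range y.length, (1:ℝ) :=
          sum_le_sum fun t _ => tvd_le_one (hax _) (hbx _)
        _ = (y.length : ℝ) := by simp
    -- DS bound
    have hDSle : DS eos (p x) (q x) (k+1) [] ≤ E := by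
      have h := DS_le eos (p x) (q x) hax hbx (k+1) []
      have hfun : (fun y : List Ω => ∑ t ∈ Finset.Ico (List.length ([] : List Ω)) y.length,
          tvd (p x (y.take t)) (q x (y.take t))) = totalLoss p q x := by
        funext y
        rw [totalLoss, Finset.range_eq_Ico]
        rfl
      rwa [hfun] at h
    have hDS0 : 0 ≤ DS eos (p x) (q x) (k+1) [] := by
      rw [DS]
      apply mul_nonneg (by norm_num)
      apply sum_nonneg; intro n _
      apply sum_nonneg; intro v _
      split_ifs
      · exact abs_nonneg _
      · exact le_rfl
    -- num ≤ E + (k+1) * DS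
    have hdiff : num ≤ E + ((k:ℝ)+1) * DS eos (p x) (q x) (k+1) [] := by
      apply S_diff_le eos (p x) (q x) hax hbx k ((k:ℝ)+1) (totalLoss p q x)
      intro y hy1 hy2
      have h1 := htv0 y
      have h2 := htvlen y
      have h3 : (y.length : ℝ) ≤ (k:ℝ) + 1 := by exact_mod_cast hy2
      rw [abs_le]
      constructor <;> linarith
    -- E ≤ (k+1) * eps
    have hEeps : E ≤ ((k:ℝ)+1) * eps := by
      rw [hEdef, hepsdef, ← S_smul]
      apply S_mono eos (q x) hb0 (k+1) []
      intro y hy1 hy2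
      have hylen : (1:ℝ) ≤ (y.length : ℝ) := by exact_mod_cast hy1
      have h3 : (y.length : ℝ) ≤ (k:ℝ) + 1 := by
        have h4 : y.length ≤ k + 1 := by simpa using hy2
        exact_mod_cast h4
      have hinv : 1 / ((k:ℝ)+1) ≤ 1 / (y.length : ℝ) :=
        one_div_le_one_div_of_le (by linarith) h3
      have := htv0 y
      calc totalLoss p q x y = (((k:ℝ)+1) * (1/((k:ℝ)+1))) * totalLoss p q x y := by
            field_simp
        _ = ((k:ℝ)+1) * ((1/((k:ℝ)+1)) * totalLoss p q x y) := by ring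
        _ ≤ ((k:ℝ)+1) * ((1 / (y.length : ℝ)) * totalLoss p q x y) := by
            apply mul_le_mul_of_nonneg_left _ (by linarith)
            exact mul_le_mul_of_nonneg_right hinv this
    have heps0 : 0 ≤ eps := by
      rw [hepsdef]
      apply S_nonneg eos (q x) hb0 (k+1) []
      intro y
      apply mul_nonneg _ (htv0 y)
      positivity
    -- num ≤ 2 (k+1)^2 eps
    have hkey : num ≤ 2 * ((k:ℝ)+1)^2 * eps := by
      have e1 : num ≤ ((k:ℝ)+2) * E := by nlinarith [hdiff, hDSle, hDS0]
      have e2 : ((k:ℝ)+2) * E ≤ ((k:ℝ)+2) * (((k:ℝ)+1) * eps) :=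
        mul_le_mul_of_nonneg_left hEeps (by linarith)
      nlinarith [heps0]
    -- Lp ≥ 1
    have hLp1 : (1:ℝ) ≤ Lp eos p x (k+1) := by
      rw [hLpS]
      have hm := S_mass eos (p x) hax k []
      calc (1:ℝ) = S eos (p x) (k+1) [] (fun _ => 1) := hm.symm
        _ ≤ S eos (p x) (k+1) [] (fun y => (y.length : ℝ)) := by
          apply S_mono eos (p x) ha0 (k+1) []
          intro y hy1 _
          exact_mod_cast hy1
    have hLppos : (0:ℝ) < Lp eos p x (k+1) := by linarith
    -- conclude
    rw [acceptRate, ge_iff_le, hnum, hepsS]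
    have hTcast : (((k+1 : ℕ)) : ℝ) = (k:ℝ) + 1 := by push_cast; ring
    rw [hTcast]
    have hfrac : num / Lp eos p x (k+1) ≤ (2 * ((k:ℝ)+1)^2 * eps) / Lp eos p x (k+1) :=
      (div_le_div_iff_of_pos_right hLppos).2 hkey
    have : (2 * ((k:ℝ)+1) ^ 2 / Lp eos p x (k+1)) * eps
        = (2 * ((k:ℝ)+1)^2 * eps) / Lp eos p x (k+1) := by ring
    rw [this]
    linarith
  refine ⟨part1, ?_⟩
  have hterm : ∀ x : ι, w x * acceptRate eos p q x (k+1)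
      ≥ w x - 2 * (((k+1:ℕ)):ℝ) * (w x * ((((k+1:ℕ)):ℝ) / Lp eos p x (k+1)
          * onPolicyLoss eos p q x (k+1))) := by
    intro x
    have h := part1 x
    have h2 := mul_le_mul_of_nonneg_left h (hw0 x)
    calc w x - 2 * (((k+1:ℕ)):ℝ) * (w x * ((((k+1:ℕ)):ℝ) / Lp eos p x (k+1)
          * onPolicyLoss eos p q x (k+1)))
        = w x * (1 - (2 * (((k+1:ℕ)):ℝ) ^ 2 / Lp eos p x (k+1))
            * onPolicyLoss eos p q x (k+1)) := by ring
      _ ≤ w x * acceptRate eos p q x (k+1) := h2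
  have hsum := sum_le_sum (s := (univ : Finset ι))
    (f := fun x => w x - 2 * (((k+1:ℕ)):ℝ) * (w x * ((((k+1:ℕ)):ℝ) / Lp eos p x (k+1)
      * onPolicyLoss eos p q x (k+1))))
    (g := fun x => w x * acceptRate eos p q x (k+1)) (fun x _ => hterm x)
  rw [sum_sub_distrib, hw1, ← mul_sum] at hsum
  exact hsum
end

section
/- With Ω, T, p, q, p_{≤T}, q_{≤T}, α(x), ε(x) as above, if additionally every output sequence generated by the target model has length exactly T (so L_p(x) = T for all x), then E_{x∼X}[α(x)] ≥ 1 − 2T·E_{x∼X}[ε(x)] for any input distribution X. -/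
open Finset

section Aux
set_option linter.unusedSectionVars false

variable {Ω : Type*} [Fintype Ω] [DecidableEq Ω] (eos : Ω)

/-- Plain (non-indexed) model expectation. -/
noncomputable def FX (m : List Ω → Ω → ℝ) (T : ℕ) (f : List Ω → ℝ) : ℝ :=
  seqExp eos (fun _ pre => m pre) T f

/-- Model conditioned on first token `c`. -/
def shiftM (m : List Ω → Ω → ℝ) (c : Ω) : List Ω → Ω → ℝ := fun pre => m (c :: pre)

def Dist1 (m : List Ω → Ω → ℝ) : Prop := ∀ pre, IsDist (m pre)

lemma Dist1.shift {m : List Ω → Ω → ℝ} (h : Dist1 m) (c : Ω) : Dist1 (shiftM m c) :=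
  fun pre => h (c :: pre)

lemma tvd_nonneg (P Q : Ω → ℝ) : 0 ≤ tvd P Q := by
  unfold tvd
  have : (0:ℝ) ≤ ∑ c, |P c - Q c| := Finset.sum_nonneg fun c _ => abs_nonneg _
  linarith

lemma tvd_le_one {P Q : Ω → ℝ} (hP : IsDist P) (hQ : IsDist Q) : tvd P Q ≤ 1 := by
  unfold tvd
  have h : ∑ c, |P c - Q c| ≤ ∑ c, (P c + Q c) := by
    refine Finset.sum_le_sum fun c _ => ?_
    have := abs_sub_abs_le_abs_sub (P c) (Q c)
    have h1 := abs_sub (P c) (Q c)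
    calc |P c - Q c| ≤ |P c| + |Q c| := abs_sub _ _
      _ = P c + Q c := by rw [abs_of_nonneg (hP.1 c), abs_of_nonneg (hQ.1 c)]
  rw [Finset.sum_add_distrib, hP.2, hQ.2] at h
  linarith

lemma stopped_ne_nil {T : ℕ} {y : List Ω} (h : Stopped eos T y) : y ≠ [] := h.1

lemma seqProb_nonneg {m : List Ω → Ω → ℝ} (hm : ∀ pre c, 0 ≤ m pre c) (T : ℕ) (y : List Ω) :
    0 ≤ seqProb eos (fun _ pre => m pre) T y := by
  unfold seqProb
  split
  · exact Finset.prod_nonneg fun t _ => hm _ _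
  · exact le_rfl

end Aux

section Aux2
set_option linter.unusedSectionVars false
variable {Ω : Type*} [Fintype Ω] [DecidableEq Ω] (eos : Ω)

lemma FX_nonneg {m : List Ω → Ω → ℝ} (hm : ∀ pre c, 0 ≤ m pre c) (T : ℕ)
    {f : List Ω → ℝ} (hf : ∀ y, Stopped eos T y → 0 ≤ f y) : 0 ≤ FX eos m T f := by
  unfold FX seqExp
  refine Finset.sum_nonneg fun n _ => Finset.sum_nonneg fun v _ => ?_
  by_cases h : Stopped eos T (List.ofFn v)
  · exact mul_nonneg (seqProb_nonneg eos hm T _) (hf _ h)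
  · have : seqProb eos (fun _ pre => m pre) T (List.ofFn v) = 0 := by
      unfold seqProb; simp [h]
    rw [this, zero_mul]

lemma FX_mono {m : List Ω → Ω → ℝ} (hm : ∀ pre c, 0 ≤ m pre c) (T : ℕ)
    {f g : List Ω → ℝ} (hfg : ∀ y, Stopped eos T y → f y ≤ g y) :
    FX eos m T f ≤ FX eos m T g := by
  unfold FX seqExp
  refine Finset.sum_le_sum fun n _ => Finset.sum_le_sum fun v _ => ?_
  by_cases h : Stopped eos T (List.ofFn v)
  · exact mul_le_mul_of_nonneg_left (hfg _ h) (seqProb_nonneg eos hm T _)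
  · have : seqProb eos (fun _ pre => m pre) T (List.ofFn v) = 0 := by
      unfold seqProb; simp [h]
    rw [this, zero_mul, zero_mul]

lemma FX_congr (m : List Ω → Ω → ℝ) (T : ℕ)
    {f g : List Ω → ℝ} (hfg : ∀ y, Stopped eos T y → f y = g y) :
    FX eos m T f = FX eos m T g := by
  unfold FX seqExp
  refine Finset.sum_congr rfl fun n _ => Finset.sum_congr rfl fun v _ => ?_
  by_cases h : Stopped eos T (List.ofFn v)
  · rw [hfg _ h]
  · have : seqProb eos (fun _ pre => m pre) T (List.ofFn v) = 0 := by
      unfold seqProb; simp [h]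
    rw [this, zero_mul, zero_mul]

lemma FX_add (m : List Ω → Ω → ℝ) (T : ℕ) (f g : List Ω → ℝ) :
    FX eos m T (fun y => f y + g y) = FX eos m T f + FX eos m T g := by
  unfold FX seqExp
  rw [← Finset.sum_add_distrib]
  refine Finset.sum_congr rfl fun n _ => ?_
  rw [← Finset.sum_add_distrib]
  exact Finset.sum_congr rfl fun v _ => mul_add _ _ _

lemma FX_smul (m : List Ω → Ω → ℝ) (T : ℕ) (a : ℝ) (f : List Ω → ℝ) :
    FX eos m T (fun y => a * f y) = a * FX eos m T f := by
  unfold FX seqExp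
  rw [Finset.mul_sum]
  refine Finset.sum_congr rfl fun n _ => ?_
  rw [Finset.mul_sum]
  exact Finset.sum_congr rfl fun v _ => by ring

lemma FX_finsum {κ : Type*} (m : List Ω → Ω → ℝ) (T : ℕ) (S : Finset κ) (h : κ → List Ω → ℝ) :
    FX eos m T (fun y => ∑ s ∈ S, h s y) = ∑ s ∈ S, FX eos m T (h s) := by
  classical
  induction S using Finset.induction with
  | empty => simp [FX, seqExp]
  | insert _ _ hx ih =>
      rw [Finset.sum_insert hx, ← ih, ← FX_add]
      refine FX_congr eos m T fun y _ => ?_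
      rw [Finset.sum_insert hx]

end Aux2

section Aux3
set_option linter.unusedSectionVars false
variable {Ω : Type*} [Fintype Ω] [DecidableEq Ω] (eos : Ω)

lemma stopped_cons {T : ℕ} {c : Ω} {y : List Ω} (hy : y ≠ []) :
    Stopped eos T (c :: y) ↔ (c ≠ eos ∧ Stopped eos (T - 1) y) := by
  have hn : 1 ≤ y.length := List.length_pos_iff.mpr hy
  unfold Stopped
  rw [List.dropLast_cons_of_ne_nil hy]
  obtain ⟨a, l, rfl⟩ : ∃ a l, y = a :: l := ⟨y.head hy, y.tail, (List.cons_head_tail hy).symm⟩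
  rw [List.getLast?_cons_cons]
  simp only [List.length_cons, ne_eq, List.mem_cons, not_or]
  constructor
  · rintro ⟨-, h2, ⟨h3a, h3b⟩, h4⟩
    refine ⟨h3a ∘ Eq.symm, by simp, by omega, h3b, ?_⟩
    rcases h4 with h | h
    · exact Or.inl h
    · right; omega
  · rintro ⟨hc, -, h2, h3, h4⟩
    refine ⟨by simp, by omega, ⟨fun h => hc h.symm, h3⟩, ?_⟩
    rcases h4 with h | h
    · exact Or.inl h
    · right; omega

lemma stopped_singleton {T : ℕ} (hT : 1 ≤ T) (c : Ω) :
    Stopped eos T [c] ↔ (c = eos ∨ T = 1) := by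
  unfold Stopped
  simp only [List.dropLast_singleton, List.getLast?_singleton, List.length_singleton]
  constructor
  · rintro ⟨-, -, -, h | h⟩
    · exact Or.inl (by simpa using h)
    · exact Or.inr h.symm
  · rintro (h | h)
    · exact ⟨by simp, hT, by simp, Or.inl (by simp [h])⟩
    · exact ⟨by simp, hT, by simp, Or.inr h.symm⟩

lemma sp_cons (m : List Ω → Ω → ℝ) {T : ℕ} (c : Ω) {y : List Ω} (hy : y ≠ []) :
    seqProb eos (fun _ pre => m pre) T (c :: y)
      = (if c = eos then 0 else
          m [] c * seqProb eos (fun _ pre => shiftM m c pre) (T - 1) y) := by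
  unfold seqProb
  by_cases hc : c = eos
  · rw [if_pos hc, if_neg]
    intro h
    exact ((stopped_cons eos hy).mp h).1 hc
  · rw [if_neg hc]
    by_cases hs : Stopped eos (T - 1) y
    · rw [if_pos ((stopped_cons eos hy).mpr ⟨hc, hs⟩), if_pos hs]
      rw [List.length_cons, Finset.prod_range_succ']
      simp only [List.take_succ_cons, List.getD_cons_succ, List.getD_cons_zero, List.take_zero]
      rw [mul_comm]
      rfl
    · rw [if_neg, if_neg hs, mul_zero]
      intro h
      exact hs ((stopped_cons eos hy).mp h).2

end Aux3

section Aux4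
set_option linter.unusedSectionVars false
variable {Ω : Type*} [Fintype Ω] [DecidableEq Ω] (eos : Ω)

lemma sp_singleton (m : List Ω → Ω → ℝ) {T : ℕ} (hT : 1 ≤ T) (c : Ω) :
    seqProb eos (fun _ pre => m pre) T [c] = if c = eos ∨ T = 1 then m [] c else 0 := by
  unfold seqProb
  by_cases h : c = eos ∨ T = 1
  · rw [if_pos ((stopped_singleton eos hT c).mpr h), if_pos h]
    simp
  · rw [if_neg (fun hs => h ((stopped_singleton eos hT c).mp hs)), if_neg h]

lemma sum_fun_one (g : List Ω → ℝ) : ∑ v : Fin 1 → Ω, g (List.ofFn v) = ∑ c : Ω, g [c] := by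
  rw [← Equiv.sum_comp (Equiv.funUnique (Fin 1) Ω).symm (fun v => g (List.ofFn v))]
  refine Finset.sum_congr rfl fun c _ => ?_
  congr 1

lemma sum_fun_succ (k : ℕ) (g : List Ω → ℝ) :
    ∑ v : Fin (k+1) → Ω, g (List.ofFn v) = ∑ c : Ω, ∑ w : Fin k → Ω, g (c :: List.ofFn w) := by
  rw [← Equiv.sum_comp (Fin.consEquiv (fun _ => Ω)) (fun v => g (List.ofFn v)),
    Fintype.sum_prod_type]
  refine Finset.sum_congr rfl fun c _ => Finset.sum_congr rfl fun w _ => ?_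
  congr 1
  exact List.ofFn_cons c w

lemma sum_ite_ne (h : Ω → ℝ) :
    ∑ c, (if c = eos then 0 else h c) = ∑ c ∈ Finset.univ.erase eos, h c := by
  rw [← Finset.sum_erase (a := eos) (f := fun c => if c = eos then (0:ℝ) else h c) Finset.univ (by simp)]
  exact Finset.sum_congr rfl fun c hc => if_neg (Finset.ne_of_mem_erase hc)

lemma FX_step (m : List Ω → Ω → ℝ) {T : ℕ} (hT : 1 ≤ T) (f : List Ω → ℝ) :
    FX eos m T f = m [] eos * f [eos]
      + ∑ c ∈ Finset.univ.erase eos, m [] c *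
          (if T = 1 then f [c] else FX eos (shiftM m c) (T - 1) (fun y => f (c :: y))) := by
  have hIcc : Finset.Icc 1 T = insert 1 (Finset.Icc 2 T) := by
    ext n; simp only [Finset.mem_Icc, Finset.mem_insert]; omega
  have h1notin : (1 : ℕ) ∉ Finset.Icc 2 T := by simp
  unfold FX seqExp
  have h1 : ∑ v : Fin 1 → Ω, seqProb eos (fun _ pre => m pre) T (List.ofFn v) * f (List.ofFn v)
      = ∑ c : Ω, seqProb eos (fun _ pre => m pre) T [c] * f [c] :=
    sum_fun_one (fun y => seqProb eos (fun _ pre => m pre) T y * f y)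
  rw [hIcc, Finset.sum_insert h1notin, h1]
  by_cases hT1 : T = 1
  · subst hT1
    have : Finset.Icc 2 1 = (∅ : Finset ℕ) := by decide
    rw [this, Finset.sum_empty, add_zero]
    simp only [if_pos rfl]
    rw [← Finset.sum_erase_add Finset.univ _ (Finset.mem_univ eos)]
    rw [add_comm]
    congr 1
    · rw [sp_singleton eos m le_rfl eos]; simp
    · refine Finset.sum_congr rfl fun c hc => ?_
      rw [sp_singleton eos m le_rfl c]
      simp
  · -- T ≥ 2
    have hT2 : 2 ≤ T := by omega
    simp only [if_neg hT1]
    have hterm1 : ∑ c : Ω, seqProb eos (fun _ pre => m pre) T [c] * f [c]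
        = m [] eos * f [eos] := by
      have : ∀ c : Ω, seqProb eos (fun _ pre => m pre) T [c] * f [c]
          = if c = eos then m [] eos * f [eos] else 0 := by
        intro c
        rw [sp_singleton eos m hT c]
        by_cases hc : c = eos
        · subst hc; simp
        · simp [hc, hT1]
      rw [Finset.sum_congr rfl (fun c _ => this c), Finset.sum_ite_eq' Finset.univ eos
        (fun _ => m [] eos * f [eos])]
      simp
  -- remaining: the tail sum
    rw [hterm1]
    congr 1
    have hmap : Finset.Icc 2 T = Finset.map (addRightEmbedding 1) (Finset.Icc 1 (T-1)) := by
      rw [Finset.map_add_right_Icc]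
      congr 1
      omega
    rw [hmap, Finset.sum_map]
    have hinner : ∀ k ∈ Finset.Icc 1 (T-1),
        (∑ v : Fin (addRightEmbedding 1 k) → Ω,
          seqProb eos (fun _ pre => m pre) T (List.ofFn v) * f (List.ofFn v))
        = ∑ c ∈ Finset.univ.erase eos, m [] c *
            ∑ w : Fin k → Ω, seqProb eos (fun _ pre => shiftM m c pre) (T-1) (List.ofFn w)
              * f (c :: List.ofFn w) := by
      intro k hk
      have hk1 : 1 ≤ k := (Finset.mem_Icc.mp hk).1
      have : (addRightEmbedding 1 k) = k + 1 := rfl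
      rw [this]
      have h2 : ∑ v : Fin (k+1) → Ω,
          seqProb eos (fun _ pre => m pre) T (List.ofFn v) * f (List.ofFn v)
          = ∑ c : Ω, ∑ w : Fin k → Ω,
              seqProb eos (fun _ pre => m pre) T (c :: List.ofFn w) * f (c :: List.ofFn w) :=
        sum_fun_succ k (fun y => seqProb eos (fun _ pre => m pre) T y * f y)
      rw [h2, ← sum_ite_ne eos]
      refine Finset.sum_congr rfl fun c _ => ?_
      rw [Finset.mul_sum]
      by_cases hc : c = eos
      · rw [if_pos hc]
        refine (Finset.sum_eq_zero fun w _ => ?_)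
        have hne : List.ofFn w ≠ [] := by
          intro h
          have := congrArg List.length h
          simp at this
          omega
        rw [sp_cons eos m c hne, if_pos hc, zero_mul]
      · rw [if_neg hc]
        refine Finset.sum_congr rfl fun w _ => ?_
        have hne : List.ofFn w ≠ [] := by
          intro h
          have := congrArg List.length h
          simp at this
          omega
        rw [sp_cons eos m c hne, if_neg hc]
        ring
    rw [Finset.sum_congr rfl hinner, Finset.sum_comm]
    refine Finset.sum_congr rfl fun c _ => ?_
    rw [← Finset.mul_sum]

end Aux4

section Aux5
set_option linter.unusedSectionVars false
variable {Ω : Type*} [Fintype Ω] [DecidableEq Ω] (eos : Ω)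

/-- `HP m T`: every sequence with positive probability under `m` has length `T`. -/
def HP (m : List Ω → Ω → ℝ) (T : ℕ) : Prop :=
  ∀ y, seqProb eos (fun _ pre => m pre) T y ≠ 0 → y.length = T

lemma HP_eos {m : List Ω → Ω → ℝ} {T : ℕ} (h : HP eos m T) (hT : 2 ≤ T) :
    m [] eos = 0 := by
  by_contra h0
  have hsp : seqProb eos (fun _ pre => m pre) T [eos] ≠ 0 := by
    rw [sp_singleton eos m (by omega) eos, if_pos (Or.inl rfl)]
    exact h0
  have := h _ hsp
  simp at this
  omega

lemma HP_shift {m : List Ω → Ω → ℝ} {T : ℕ} (h : HP eos m T) (hT : 2 ≤ T)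
    {c : Ω} (hc : c ≠ eos) (hc0 : m [] c ≠ 0) : HP eos (shiftM m c) (T - 1) := by
  intro y hy
  have hyne : y ≠ [] := by
    intro h0
    apply hy
    subst h0
    unfold seqProb
    rw [if_neg]
    rintro ⟨h1, -⟩
    exact h1 rfl
  have hsp : seqProb eos (fun _ pre => m pre) T (c :: y) ≠ 0 := by
    rw [sp_cons eos m c hyne, if_neg hc]
    exact mul_ne_zero hc0 hy
  have := h _ hsp
  simp at this
  omega

lemma FX_mass {m : List Ω → Ω → ℝ} (hm : Dist1 m) {T : ℕ} (hT : 1 ≤ T) :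
    FX eos m T (fun _ => (1:ℝ)) = 1 := by
  induction T generalizing m with
  | zero => omega
  | succ T ih =>
    rw [FX_step eos m hT]
    by_cases hT1 : T + 1 = 1
    · simp only [if_pos hT1]
      rw [mul_one]
      have := (hm []).2
      rw [← Finset.sum_erase_add Finset.univ _ (Finset.mem_univ eos)] at this
      rw [add_comm]
      simpa [mul_one] using this
    · simp only [if_neg hT1]
      have hT' : 1 ≤ T := by omega
      have : ∀ c ∈ Finset.univ.erase eos,
          m [] c * FX eos (shiftM m c) (T + 1 - 1) (fun _ => (1:ℝ)) = m [] c := by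
        intro c _
        have : T + 1 - 1 = T := rfl
        rw [this, ih (hm.shift c) hT', mul_one]
      rw [Finset.sum_congr rfl this, mul_one]
      have := (hm []).2
      rw [← Finset.sum_erase_add Finset.univ _ (Finset.mem_univ eos)] at this
      linarith

lemma FX_le_one {m : List Ω → Ω → ℝ} (hm : Dist1 m) {T : ℕ} (hT : 1 ≤ T)
    {f : List Ω → ℝ} (hf : ∀ y, Stopped eos T y → f y ≤ 1) : FX eos m T f ≤ 1 := by
  have := FX_mono eos (fun pre c => (hm pre).1 c) T hf
  rw [FX_mass eos hm hT] at this
  exact this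

lemma FX_len {m : List Ω → Ω → ℝ} (hm : Dist1 m) {T : ℕ} (hT : 1 ≤ T)
    (h : HP eos m T) : FX eos m T (fun y => (y.length : ℝ)) = T := by
  induction T generalizing m with
  | zero => omega
  | succ T ih =>
    rw [FX_step eos m hT]
    by_cases hT1 : T + 1 = 1
    · have hT0 : T = 0 := by omega
      subst hT0
      simp only [if_pos rfl]
      simp only [List.length_singleton, Nat.cast_one, mul_one]
      have := (hm []).2
      rw [← Finset.sum_erase_add Finset.univ _ (Finset.mem_univ eos)] at this
      rw [add_comm]
      push_cast
      simpa using this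
    · simp only [if_neg hT1]
      have hT' : 1 ≤ T := by omega
      have heos : m [] eos = 0 := HP_eos eos h (by omega)
      rw [heos, zero_mul, zero_add]
      have hc : ∀ c ∈ Finset.univ.erase eos,
          m [] c * FX eos (shiftM m c) (T + 1 - 1) (fun y => ((c :: y).length : ℝ))
            = m [] c * (T + 1) := by
        intro c hcmem
        by_cases hc0 : m [] c = 0
        · rw [hc0, zero_mul, zero_mul]
        · have hcne : c ≠ eos := Finset.ne_of_mem_erase hcmem
          have hHP' : HP eos (shiftM m c) T := by
            have := HP_shift eos h (by omega) hcne hc0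
            simpa using this
          have h1 : FX eos (shiftM m c) T (fun y => ((c :: y).length : ℝ))
              = FX eos (shiftM m c) T (fun y => (y.length : ℝ) + 1) := by
            refine FX_congr eos _ T fun y _ => ?_
            simp
          have : T + 1 - 1 = T := rfl
          rw [this, h1, FX_add, ih (hm.shift c) hT' hHP',
            FX_mass eos (hm.shift c) hT']
      rw [Finset.sum_congr rfl hc, ← Finset.sum_mul]
      have := (hm []).2
      rw [← Finset.sum_erase_add Finset.univ _ (Finset.mem_univ eos), heos, add_zero] at this
      rw [this, one_mul]
      push_cast
      ring

end Aux5

section Aux6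
set_option linter.unusedSectionVars false
variable {Ω : Type*} [Fintype Ω] [DecidableEq Ω] (eos : Ω)

/-- Per-position loss: `1{s < |y|} · tvd(P(y_{<s}), Q(y_{<s}))` (0-indexed position). -/
noncomputable def gL (P Q : List Ω → Ω → ℝ) (s : ℕ) (y : List Ω) : ℝ :=
  if s < y.length then tvd (P (y.take s)) (Q (y.take s)) else 0

lemma gL_nonneg (P Q : List Ω → Ω → ℝ) (s : ℕ) (y : List Ω) : 0 ≤ gL P Q s y := by
  unfold gL; split
  · exact tvd_nonneg _ _
  · exact le_rfl

lemma gL_le_one {P Q : List Ω → Ω → ℝ} (hP : Dist1 P) (hQ : Dist1 Q) (s : ℕ) (y : List Ω) :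
    gL P Q s y ≤ 1 := by
  unfold gL; split
  · exact tvd_le_one (hP _) (hQ _)
  · exact zero_le_one

lemma gL_cons (P Q : List Ω → Ω → ℝ) (s : ℕ) (c : Ω) (y : List Ω) :
    gL P Q (s+1) (c :: y) = gL (shiftM P c) (shiftM Q c) s y := by
  unfold gL
  simp only [List.length_cons, List.take_succ_cons, Nat.add_lt_add_iff_right]
  rfl

lemma FX_zero (m : List Ω → Ω → ℝ) (T : ℕ) : FX eos m T (fun _ => (0:ℝ)) = 0 := by
  unfold FX seqExp
  simp

lemma FX_const {m : List Ω → Ω → ℝ} (hm : Dist1 m) {T : ℕ} (hT : 1 ≤ T) (a : ℝ) :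
    FX eos m T (fun _ => a) = a := by
  have h1 : FX eos m T (fun _ => a) = FX eos m T (fun y => a * (fun _ => (1:ℝ)) y) := by
    refine FX_congr eos m T fun y _ => ?_
    simp
  rw [h1, FX_smul, FX_mass eos hm hT, mul_one]

lemma FX_gL_zero {m : List Ω → Ω → ℝ} (hm : Dist1 m) {T : ℕ} (hT : 1 ≤ T)
    (P Q : List Ω → Ω → ℝ) :
    FX eos m T (gL P Q 0) = tvd (P []) (Q []) := by
  have h1 : FX eos m T (gL P Q 0) = FX eos m T (fun _ => tvd (P []) (Q [])) := by
    refine FX_congr eos m T fun y hy => ?_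
    unfold gL
    rw [if_pos (List.length_pos_iff.mpr hy.1)]
    simp
  rw [h1, FX_const eos hm hT]

lemma FX_gL_peel (m P Q : List Ω → Ω → ℝ) {T : ℕ} (hT : 2 ≤ T) (s : ℕ) :
    FX eos m T (gL P Q (s+1)) = ∑ c ∈ Finset.univ.erase eos,
      m [] c * FX eos (shiftM m c) (T-1) (gL (shiftM P c) (shiftM Q c) s) := by
  rw [FX_step eos m (by omega)]
  have h0 : gL P Q (s+1) [eos] = 0 := by
    unfold gL
    rw [if_neg (by simp)]
  rw [h0, mul_zero, zero_add]
  refine Finset.sum_congr rfl fun c _ => ?_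
  rw [if_neg (by omega)]
  congr 1
  refine FX_congr eos _ _ fun y _ => gL_cons P Q s c y

lemma KEY {T : ℕ} (hT : 1 ≤ T) {P Q : List Ω → Ω → ℝ}
    (hP : Dist1 P) (hQ : Dist1 Q) (hHP : HP eos P T) (s : ℕ) :
    FX eos P T (gL P Q s) ≤ FX eos Q T (gL P Q s)
      + 2 * ∑ r ∈ Finset.range s, FX eos Q T (gL P Q r) := by
  induction T generalizing P Q s with
  | zero => omega
  | succ T ih =>
    have hEEnn : ∀ r, 0 ≤ FX eos Q (T+1) (gL P Q r) := fun r =>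
      FX_nonneg eos (fun pre c => (hQ pre).1 c) _ (fun y _ => gL_nonneg P Q r y)
    match s with
    | 0 =>
      rw [FX_gL_zero eos hP hT P Q, FX_gL_zero eos hQ hT P Q]
      simp
    | s + 1 =>
      by_cases hT1 : T + 1 = 1
      · -- horizon 1 : the loss at positions ≥ 1 vanishes
        have hLHS : FX eos P (T+1) (gL P Q (s+1)) = 0 := by
          have h1 : FX eos P (T+1) (gL P Q (s+1)) = FX eos P (T+1) (fun _ => (0:ℝ)) := by
            refine FX_congr eos P (T+1) fun y hy => ?_
            unfold gL
            rw [if_neg (by have := hy.2.1; omega)]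
          rw [h1, FX_zero]
        rw [hLHS]
        have := hEEnn (s+1)
        have h2 : (0:ℝ) ≤ ∑ r ∈ Finset.range (s+1), FX eos Q (T+1) (gL P Q r) :=
          Finset.sum_nonneg fun r _ => hEEnn r
        linarith
      · have hT2 : 2 ≤ T + 1 := by omega
        have hT' : 1 ≤ T := by omega
        have hTm : T + 1 - 1 = T := rfl
        rw [FX_gL_peel eos P P Q hT2 s, FX_gL_peel eos Q P Q hT2 s]
        rw [Finset.sum_range_succ']
        have hpeel : ∀ r, FX eos Q (T+1) (gL P Q (r+1)) = ∑ c ∈ Finset.univ.erase eos,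
            Q [] c * FX eos (shiftM Q c) T (gL (shiftM P c) (shiftM Q c) r) := by
          intro r
          rw [FX_gL_peel eos Q P Q hT2 r, hTm]
        rw [Finset.sum_congr rfl (fun r _ => hpeel r), FX_gL_zero eos hQ hT P Q]
        rw [hTm]
        -- now all sums over c ∈ univ.erase eos
        have key_c : ∀ c ∈ Finset.univ.erase eos,
            P [] c * FX eos (shiftM P c) T (gL (shiftM P c) (shiftM Q c) s)
            ≤ Q [] c * FX eos (shiftM Q c) T (gL (shiftM P c) (shiftM Q c) s)
              + 2 * ∑ r ∈ Finset.range s,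
                  Q [] c * FX eos (shiftM Q c) T (gL (shiftM P c) (shiftM Q c) r)
              + |P [] c - Q [] c| := by
          intro c hc
          have hcne : c ≠ eos := Finset.ne_of_mem_erase hc
          set Ac := FX eos (shiftM P c) T (gL (shiftM P c) (shiftM Q c) s) with hAc
          set Ec := FX eos (shiftM Q c) T (gL (shiftM P c) (shiftM Q c) s) with hEc
          set Sc := ∑ r ∈ Finset.range s,
            FX eos (shiftM Q c) T (gL (shiftM P c) (shiftM Q c) r) with hSc
          have hEcnn : 0 ≤ Ec :=
            FX_nonneg eos (fun pre d => ((hQ.shift c) pre).1 d) _ (fun y _ => gL_nonneg _ _ _ _)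
          have hScnn : 0 ≤ Sc := Finset.sum_nonneg fun r _ =>
            FX_nonneg eos (fun pre d => ((hQ.shift c) pre).1 d) _ (fun y _ => gL_nonneg _ _ _ _)
          have hQnn : 0 ≤ Q [] c := (hQ []).1 c
          have habs : P [] c - Q [] c ≤ |P [] c - Q [] c| := le_abs_self _
          rw [← Finset.mul_sum, ← hSc]
          by_cases hc0 : P [] c = 0
          · rw [hc0, zero_mul]
            have h1 : 0 ≤ Q [] c * Ec := mul_nonneg hQnn hEcnn
            have h2 : 0 ≤ Q [] c * Sc := mul_nonneg hQnn hScnn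
            have h3 : (0:ℝ) ≤ |(0:ℝ) - Q [] c| := abs_nonneg _
            linarith
          · have hHP' : HP eos (shiftM P c) T := by
              have := HP_shift eos hHP hT2 hcne hc0
              simpa using this
            have hIH : Ac ≤ Ec + 2 * Sc := ih hT' (hP.shift c) (hQ.shift c) hHP' s
            have hAcnn : 0 ≤ Ac :=
              FX_nonneg eos (fun pre d => ((hP.shift c) pre).1 d) _ (fun y _ => gL_nonneg _ _ _ _)
            have hAc1 : Ac ≤ 1 :=
              FX_le_one eos (hP.shift c) hT'
                (fun y _ => gL_le_one (hP.shift c) (hQ.shift c) s y)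
            have e1 : Q [] c * Ac ≤ Q [] c * (Ec + 2 * Sc) :=
              mul_le_mul_of_nonneg_left hIH hQnn
            have e2 : (P [] c - Q [] c) * Ac ≤ |P [] c - Q [] c| := by
              calc (P [] c - Q [] c) * Ac ≤ |P [] c - Q [] c| * Ac :=
                    mul_le_mul_of_nonneg_right habs hAcnn
                _ ≤ |P [] c - Q [] c| * 1 :=
                    mul_le_mul_of_nonneg_left hAc1 (abs_nonneg _)
                _ = |P [] c - Q [] c| := mul_one _
            nlinarith [e1, e2]
        have habs_sum : ∑ c ∈ Finset.univ.erase eos, |P [] c - Q [] c|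
            ≤ 2 * tvd (P []) (Q []) := by
          unfold tvd
          have h1 : ∑ c ∈ Finset.univ.erase eos, |P [] c - Q [] c|
              ≤ ∑ c, |P [] c - Q [] c| :=
            Finset.sum_le_sum_of_subset_of_nonneg (Finset.subset_univ _)
              (fun c _ _ => abs_nonneg _)
          linarith
        have hsum := Finset.sum_le_sum key_c
        rw [Finset.sum_add_distrib, Finset.sum_add_distrib] at hsum
        have hswap : ∑ c ∈ Finset.univ.erase eos, 2 * ∑ r ∈ Finset.range s,
            Q [] c * FX eos (shiftM Q c) T (gL (shiftM P c) (shiftM Q c) r)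
            = 2 * ∑ r ∈ Finset.range s, ∑ c ∈ Finset.univ.erase eos,
                Q [] c * FX eos (shiftM Q c) T (gL (shiftM P c) (shiftM Q c) r) := by
          rw [← Finset.mul_sum]
          congr 1
          exact Finset.sum_comm
        rw [hswap] at hsum
        linarith [hsum, habs_sum]
end Aux6

section Final
set_option linter.unusedSectionVars false
variable {Ω : Type*} [Fintype Ω] [DecidableEq Ω] (eos : Ω)

/-- Total loss (plain-model form). -/
noncomputable def TLf (P Q : List Ω → Ω → ℝ) (y : List Ω) : ℝ :=
  ∑ t ∈ Finset.range y.length, tvd (P (y.take t)) (Q (y.take t))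

lemma TLf_nonneg (P Q : List Ω → Ω → ℝ) (y : List Ω) : 0 ≤ TLf P Q y :=
  Finset.sum_nonneg fun t _ => tvd_nonneg _ _

lemma TLf_eq_sum_gL (P Q : List Ω → Ω → ℝ) {T : ℕ} {y : List Ω} (hy : y.length ≤ T) :
    TLf P Q y = ∑ s ∈ Finset.range T, gL P Q s y := by
  unfold TLf
  have h1 : ∑ s ∈ Finset.range y.length, gL P Q s y = ∑ s ∈ Finset.range T, gL P Q s y :=
    Finset.sum_subset (Finset.range_subset_range.mpr hy) (fun t _ ht => by
      unfold gL; rw [if_neg (fun h => ht (Finset.mem_range.mpr h))])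
  rw [← h1]
  exact Finset.sum_congr rfl fun t ht => by
    unfold gL; rw [if_pos (Finset.mem_range.mp ht)]

/-- Core per-input inequality: `E_p[totalLoss] ≤ 2T · E_q[totalLoss]`. -/
lemma core_bound {T : ℕ} (hT : 1 ≤ T) {P Q : List Ω → Ω → ℝ}
    (hP : Dist1 P) (hQ : Dist1 Q) (hHP : HP eos P T) :
    FX eos P T (TLf P Q) ≤ 2 * T * FX eos Q T (TLf P Q) := by
  have hdecomp : ∀ (m : List Ω → Ω → ℝ),
      FX eos m T (TLf P Q) = ∑ s ∈ Finset.range T, FX eos m T (gL P Q s) := by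
    intro m
    rw [← FX_finsum]
    exact FX_congr eos m T fun y hy => TLf_eq_sum_gL P Q hy.2.1
  have hEEnn : ∀ r, 0 ≤ FX eos Q T (gL P Q r) := fun r =>
    FX_nonneg eos (fun pre c => (hQ pre).1 c) _ (fun y _ => gL_nonneg P Q r y)
  set Qtot := FX eos Q T (TLf P Q) with hQtot
  have hQtot_eq : Qtot = ∑ s ∈ Finset.range T, FX eos Q T (gL P Q s) := hdecomp Q
  have hbound : ∀ s ∈ Finset.range T,
      FX eos P T (gL P Q s) ≤ 2 * Qtot - FX eos Q T (gL P Q s) := by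
    intro s hs
    have hkey := KEY eos hT hP hQ hHP s
    have hsub : ∑ r ∈ Finset.range s, FX eos Q T (gL P Q r) + FX eos Q T (gL P Q s)
        ≤ Qtot := by
      rw [hQtot_eq, ← Finset.sum_range_succ]
      exact Finset.sum_le_sum_of_subset_of_nonneg
        (Finset.range_subset_range.mpr (Finset.mem_range.mp hs)) (fun r _ _ => hEEnn r)
    linarith
  rw [hdecomp P]
  calc ∑ s ∈ Finset.range T, FX eos P T (gL P Q s)
      ≤ ∑ s ∈ Finset.range T, (2 * Qtot - FX eos Q T (gL P Q s)) :=
        Finset.sum_le_sum hbound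
    _ = T * (2 * Qtot) - Qtot := by
        rw [Finset.sum_sub_distrib, Finset.sum_const, Finset.card_range, ← hQtot_eq]
        simp [nsmul_eq_mul]
    _ ≤ 2 * T * Qtot := by
        have hQnn : 0 ≤ Qtot := by
          rw [hQtot_eq]; exact Finset.sum_nonneg fun r _ => hEEnn r
        nlinarith

end Final

/-- **DistillSpec, Theorem 1, fixed-length case.** If every output sequence generated by the
target model has length exactly `T`, then `E_{x∼X}[α(x)] ≥ 1 − 2T · E_{x∼X}[ε(x)]`. -/
theorem acceptance_rate_lower_bound_fixed_length
    {Ω ι : Type*} [Fintype Ω] [DecidableEq Ω] [Fintype ι] (eos : Ω)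
    (T : ℕ) (hT : 1 ≤ T)
    (p q : ι → List Ω → Ω → ℝ) (hp : IsModel p) (hq : IsModel q)
    (hlen : ∀ (x : ι) (y : List Ω), seqProb eos (fun _ pre => p x pre) T y ≠ 0 → y.length = T)
    (w : ι → ℝ) (hw0 : ∀ x, 0 ≤ w x) (hw1 : ∑ x, w x = 1) :
    ∑ x, w x * acceptRate eos p q x T ≥
      1 - 2 * (T : ℝ) * ∑ x, w x * onPolicyLoss eos p q x T := by
  have hTpos : (0:ℝ) < T := by exact_mod_cast hT
  -- pointwise bound
  have hpoint : ∀ x, 1 - 2 * (T:ℝ) * onPolicyLoss eos p q x T ≤ acceptRate eos p q x T := by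
    intro x
    have hP : Dist1 (p x) := fun pre => hp x pre
    have hQ : Dist1 (q x) := fun pre => hq x pre
    have hHPx : HP eos (p x) T := hlen x
    have hTL : totalLoss p q x = TLf (p x) (q x) := rfl
    set Ptot := FX eos (p x) T (TLf (p x) (q x)) with hPtot
    set Qtot := FX eos (q x) T (TLf (p x) (q x)) with hQtot
    have hcore : Ptot ≤ 2 * T * Qtot := core_bound eos hT hP hQ hHPx
    have hQnn : 0 ≤ Qtot :=
      FX_nonneg eos (fun pre c => (hQ pre).1 c) _ (fun y _ => TLf_nonneg _ _ _)
    have hLp : Lp eos p x T = T := FX_len eos hP hT hHPx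
    have hAR : acceptRate eos p q x T = 1 - Ptot / T := by
      unfold acceptRate
      rw [hLp]
      congr 2
    have heps : (1 / (T:ℝ)) * Qtot ≤ onPolicyLoss eos p q x T := by
      have h1 : FX eos (q x) T (fun y => (1/(T:ℝ)) * TLf (p x) (q x) y)
          ≤ FX eos (q x) T (fun y => (1/(y.length:ℝ)) * TLf (p x) (q x) y) := by
        refine FX_mono eos (fun pre c => (hQ pre).1 c) T fun y hy => ?_
        have hpos : (0:ℝ) < y.length := by
          exact_mod_cast List.length_pos_iff.mpr hy.1
        have hle : (y.length:ℝ) ≤ T := by exact_mod_cast hy.2.1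
        exact mul_le_mul_of_nonneg_right (one_div_le_one_div_of_le hpos hle)
          (TLf_nonneg _ _ _)
      rw [FX_smul] at h1
      exact h1
    have hfield : (T:ℝ) * (1 / T * Qtot) = Qtot := by field_simp
    have h2 : 2 * Qtot ≤ 2 * T * onPolicyLoss eos p q x T := by
      have h3 := mul_le_mul_of_nonneg_left heps (le_of_lt hTpos)
      rw [hfield] at h3
      nlinarith
    have h1 : Ptot / T ≤ 2 * Qtot := by
      rw [div_le_iff₀ hTpos]
      nlinarith
    rw [hAR]
    linarith
  -- sum it up
  have hsum : ∑ x, w x * (1 - 2 * (T:ℝ) * onPolicyLoss eos p q x T)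
      ≤ ∑ x, w x * acceptRate eos p q x T :=
    Finset.sum_le_sum fun x _ => mul_le_mul_of_nonneg_left (hpoint x) (hw0 x)
  have hexp : ∑ x, w x * (1 - 2 * (T:ℝ) * onPolicyLoss eos p q x T)
      = 1 - 2 * (T:ℝ) * ∑ x, w x * onPolicyLoss eos p q x T := by
    have h1 : ∀ x, w x * (1 - 2 * (T:ℝ) * onPolicyLoss eos p q x T)
        = w x - 2 * (T:ℝ) * (w x * onPolicyLoss eos p q x T) := by
      intro x; ring
    rw [Finset.sum_congr rfl (fun x _ => h1 x), Finset.sum_sub_distrib, hw1,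
      ← Finset.mul_sum]
  rw [ge_iff_le, ← hexp]
  exact hsum
end

section
/- With Ω, T, p, q as above and the mixed-model sequence distributions M(x, y, z) for strings z over the alphabet {P, Q}, for every input x and every 1 ≤ t ≤ T: A_t(x) = sup over all functions δ : Ω^t → [−1/2, 1/2] (extended by δ(y) = 0 for sequences y of length ≠ t) of { E_{y∼M(x, ∅, P^t)}[δ(y)] − E_{y∼M(x, ∅, P^{t−1}Q)}[δ(y)] }, where A_t(x) = E_{y∼p_{≤T}(·|x)}[ 1{t ≤ |y|} · D_TVD(p(·|x,y_{<t}), q(·|x,y_{<t})) ]. -/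
open Finset

set_option linter.unusedSectionVars false

section Helpers

open Classical

variable {Ω : Type*} [Fintype Ω] [DecidableEq Ω] (eos : Ω)

noncomputable def prefProb (eos : Ω) (P : List Ω → Ω → ℝ) (l : List Ω) : ℝ :=
  ∏ s ∈ Finset.range l.length, P (l.take s) (l.getD s eos)

lemma getD_eq_of_prefix {l y : List Ω} (h : l <+: y) {s : ℕ} (hs : s < l.length) (d : Ω) :
    y.getD s d = l.getD s d := by
  rw [List.getD_eq_getElem?_getD, List.getD_eq_getElem?_getD,
    List.getElem?_eq_getElem hs, List.getElem?_eq_getElem (hs.trans_le h.length_le),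
    h.getElem hs]

lemma take_eq_of_prefix {l y : List Ω} (h : l <+: y) {s : ℕ} (hs : s ≤ l.length) :
    y.take s = l.take s := by
  obtain ⟨r, rfl⟩ := h
  exact List.take_append_of_le_length hs

lemma prefProb_congr (P : List Ω → Ω → ℝ) {l y : List Ω} (h : l <+: y) :
    ∏ s ∈ Finset.range l.length, P (y.take s) (y.getD s eos) = prefProb eos P l := by
  refine Finset.prod_congr rfl fun s hs => ?_
  rw [Finset.mem_range] at hs
  rw [take_eq_of_prefix h hs.le, getD_eq_of_prefix h hs]

lemma prefProb_append (P : List Ω → Ω → ℝ) (l : List Ω) (c : Ω) :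
    prefProb eos P (l ++ [c]) = prefProb eos P l * P l c := by
  have hpre : l <+: l ++ [c] := ⟨[c], rfl⟩
  rw [prefProb, List.length_append, List.length_singleton, Finset.prod_range_succ,
    prefProb_congr eos P hpre]
  have h1 : (l ++ [c]).take l.length = l := by simp [List.take_append_of_le_length]
  have h2 : (l ++ [c]).getD l.length eos = c := by
    simp [List.getD_eq_getElem?_getD, List.getElem?_append_right]
  rw [h1, h2]

lemma prefProb_nonneg {P : List Ω → Ω → ℝ} (hP : ∀ pre c, 0 ≤ P pre c) (l : List Ω) :
    0 ≤ prefProb eos P l :=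
  Finset.prod_nonneg fun _ _ => hP _ _

/-- Sum collapse: summing an `ofFn v = l` indicator over all `v : Fin n → Ω`. -/
lemma sum_ofFn_ite (n : ℕ) (l : List Ω) (g : List Ω → ℝ) :
    ∑ v : Fin n → Ω, (if List.ofFn v = l then g (List.ofFn v) else 0)
      = if l.length = n then g l else 0 := by
  by_cases h : l.length = n
  · subst h
    have hv : ∀ v : Fin l.length → Ω, List.ofFn v = l ↔ v = fun i => l.get i := by
      intro v
      constructor
      · intro hv
        exact List.ofFn_injective (hv.trans (List.ofFn_get l).symm)
      · rintro rfl
        exact List.ofFn_get l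
    rw [Finset.sum_congr rfl fun v _ => by rw [if_congr (hv v) rfl rfl]]
    rw [Finset.sum_ite_eq' Finset.univ (fun i => l.get i) (fun v => g (List.ofFn v))]
    simp [List.ofFn_get]
  · rw [if_neg h]
    refine Finset.sum_eq_zero fun v _ => ?_
    rw [if_neg]
    intro hv
    apply h
    rw [← hv]
    simp

end Helpers

section Helpers2

open Classical

variable {Ω : Type*} [Fintype Ω] [DecidableEq Ω] (eos : Ω)

lemma ite_prefix_split (pre y : List Ω) (a : ℝ) :
    (if pre <+: y ∧ pre.length < y.length then a else 0)
      = ∑ c : Ω, ((if pre ++ [c] <+: y ∧ pre.length + 1 < y.length then a else 0)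
          + (if y = pre ++ [c] then a else 0)) := by
  by_cases hm : pre <+: y ∧ pre.length < y.length
  · obtain ⟨h1, h2⟩ := hm
    set c₀ := y[pre.length]'h2 with hc₀def
    have hpre0 : pre = y.take pre.length := List.prefix_iff_eq_take.1 h1
    have htake : y.take (pre.length + 1) = pre ++ [c₀] := by
      rw [List.take_succ, ← hpre0, List.getElem?_eq_getElem h2]
      rfl
    have hc₀ : pre ++ [c₀] <+: y := htake ▸ List.take_prefix _ _
    have hkey : ∀ c, pre ++ [c] <+: y → c = c₀ := by
      intro c hc
      have := List.prefix_iff_eq_take.1 hc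
      rw [List.length_append, List.length_singleton, htake] at this
      simpa using this
    have hsum : ∑ c : Ω, ((if pre ++ [c] <+: y ∧ pre.length + 1 < y.length then a else 0)
          + (if y = pre ++ [c] then a else 0))
        = (if pre ++ [c₀] <+: y ∧ pre.length + 1 < y.length then a else 0)
          + (if y = pre ++ [c₀] then a else 0) := by
      refine Finset.sum_eq_single_of_mem c₀ (Finset.mem_univ _) fun c _ hc => ?_
      rw [if_neg, if_neg, add_zero]
      · intro hy
        exact hc (hkey c (hy ▸ List.prefix_refl _))
      · intro hcond
        exact hc (hkey c hcond.1)
    rw [if_pos ⟨h1, h2⟩, hsum]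
    have hle : pre.length + 1 ≤ y.length := by
      have := hc₀.length_le; simpa using this
    rcases lt_or_eq_of_le hle with hlt | heq
    · rw [if_pos ⟨hc₀, hlt⟩, if_neg, add_zero]
      intro hy
      rw [hy] at hlt
      simp at hlt
    · rw [if_neg (fun hcond => absurd hcond.2 (by omega)),
        if_pos (hc₀.eq_of_length (by simp [← heq])).symm, zero_add]
  · rw [if_neg hm]
    symm
    refine Finset.sum_eq_zero fun c _ => ?_
    rw [if_neg, if_neg, add_zero]
    · intro hy
      refine hm ⟨hy ▸ ⟨[c], rfl⟩, ?_⟩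
      rw [hy]
      simp
    · intro hcond
      refine hm ⟨(List.prefix_append pre [c]).trans hcond.1, ?_⟩
      have := hcond.2
      omega

lemma seqProb_eq_zero_of_mem_dropLast (ms : ℕ → List Ω → Ω → ℝ) (T : ℕ) {y : List Ω}
    (h : eos ∈ y.dropLast) : seqProb eos ms T y = 0 :=
  if_neg (fun hs => hs.2.2.1 h)

lemma seqProb_const (P : List Ω → Ω → ℝ) (T : ℕ) (y : List Ω) :
    seqProb eos (fun _ r => P r) T y = if Stopped eos T y then prefProb eos P y else 0 := rfl

lemma stopped_concat_iff {pre : List Ω} (c : Ω) (T : ℕ) (heos : eos ∉ pre)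
    (hlen : pre.length + 1 ≤ T) :
    Stopped eos T (pre ++ [c]) ↔ (c = eos ∨ pre.length + 1 = T) := by
  unfold Stopped
  simp only [List.dropLast_concat, List.getLast?_concat, List.length_append,
    List.length_singleton, Option.some_inj]
  constructor
  · rintro ⟨-, -, -, h⟩
    exact h
  · intro h
    exact ⟨by simp, hlen, heos, h⟩

lemma seqProb_concat_eval (P : List Ω → Ω → ℝ) (T : ℕ) (pre : List Ω) (c : Ω)
    (heos : eos ∉ pre) (hlen : pre.length + 1 ≤ T) :
    seqProb eos (fun _ r => P r) T (pre ++ [c])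
      = if c = eos ∨ pre.length + 1 = T then prefProb eos P pre * P pre c else 0 := by
  rw [seqProb_const, ← prefProb_append eos P pre c]
  exact if_congr (stopped_concat_iff eos c T heos hlen) rfl rfl

end Helpers2

section Helpers3

open Classical

variable {Ω : Type*} [Fintype Ω] [DecidableEq Ω] (eos : Ω)

lemma strict_ext_zero (P : List Ω → Ω → ℝ) (T : ℕ) {l : List Ω} (hl : eos ∈ l)
    (n : ℕ) (v : Fin n → Ω) :
    (if l <+: List.ofFn v ∧ l.length < n
      then seqProb eos (fun _ r => P r) T (List.ofFn v) else 0) = 0 := by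
  by_cases h : l <+: List.ofFn v ∧ l.length < n
  · rw [if_pos h]
    obtain ⟨hpre, hlt⟩ := h
    refine seqProb_eq_zero_of_mem_dropLast eos _ T ?_
    have hdl : l <+: (List.ofFn v).dropLast := by
      rw [List.dropLast_eq_take, List.prefix_take_iff]
      exact ⟨hpre, by simp; omega⟩
    exact hdl.subset hl
  · exact if_neg h

lemma mass_lemma (P : List Ω → Ω → ℝ) (hP : ∀ pre, IsDist (P pre)) (T : ℕ) :
    ∀ j : ℕ, ∀ pre : List Ω, 1 ≤ j → eos ∉ pre → pre.length + j = T →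
    ∑ n ∈ Finset.Icc 1 T, ∑ v : Fin n → Ω,
      (if pre <+: List.ofFn v ∧ pre.length < n
        then seqProb eos (fun _ r => P r) T (List.ofFn v) else 0)
      = prefProb eos P pre := by
  intro j
  induction j with
  | zero => intro pre h; omega
  | succ j ih =>
    intro pre _ heos hlen
    set M : ℕ → List Ω → Ω → ℝ := fun _ r => P r with hM
    have step1 : ∀ n : ℕ, ∀ v : Fin n → Ω,
        (if pre <+: List.ofFn v ∧ pre.length < n then seqProb eos M T (List.ofFn v) else 0)
        = ∑ c : Ω, ((if pre ++ [c] <+: List.ofFn v ∧ pre.length + 1 < n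
              then seqProb eos M T (List.ofFn v) else 0)
            + (if List.ofFn v = pre ++ [c] then seqProb eos M T (List.ofFn v) else 0)) := by
      intro n v
      have h := ite_prefix_split pre (List.ofFn v) (seqProb eos M T (List.ofFn v))
      simpa using h
    rw [Finset.sum_congr rfl fun n _ => Finset.sum_congr rfl fun v _ => step1 n v,
      Finset.sum_congr rfl fun n _ => Finset.sum_comm, Finset.sum_comm]
    have main : ∀ c : Ω,
        (∑ n ∈ Finset.Icc 1 T, ∑ v : Fin n → Ω,
          ((if pre ++ [c] <+: List.ofFn v ∧ pre.length + 1 < n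
              then seqProb eos M T (List.ofFn v) else 0)
            + (if List.ofFn v = pre ++ [c] then seqProb eos M T (List.ofFn v) else 0)))
        = prefProb eos P pre * P pre c := by
      intro c
      rw [Finset.sum_congr rfl fun n _ => Finset.sum_add_distrib, Finset.sum_add_distrib]
      have hSB : (∑ n ∈ Finset.Icc 1 T, ∑ v : Fin n → Ω,
          (if List.ofFn v = pre ++ [c] then seqProb eos M T (List.ofFn v) else 0))
          = if c = eos ∨ pre.length + 1 = T then prefProb eos P pre * P pre c else 0 := by
        rw [Finset.sum_congr rfl fun n _ => sum_ofFn_ite n (pre ++ [c]) (seqProb eos M T),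
          Finset.sum_ite_eq (Finset.Icc 1 T) ((pre ++ [c]).length) (fun _ => seqProb eos M T (pre ++ [c])),
          if_pos (by simp only [List.length_append, List.length_singleton, Finset.mem_Icc]; omega)]
        exact seqProb_concat_eval eos P T pre c heos (by omega)
      by_cases hc : c = eos
      · have hz : ∀ n : ℕ, ∀ v : Fin n → Ω,
            (if pre ++ [c] <+: List.ofFn v ∧ pre.length + 1 < n
              then seqProb eos M T (List.ofFn v) else 0) = 0 := by
          intro n v
          have h := strict_ext_zero eos P T (l := pre ++ [c]) (by simp [hc]) n v
          simpa using h
        rw [Finset.sum_congr rfl fun n _ => Finset.sum_eq_zero fun v _ => hz n v]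
        rw [hSB, if_pos (Or.inl hc)]
        simp
      · by_cases hj : j = 0
        · subst hj
          have hzero : ∀ n ∈ Finset.Icc 1 T, ∀ v : Fin n → Ω,
              (if pre ++ [c] <+: List.ofFn v ∧ pre.length + 1 < n
                then seqProb eos M T (List.ofFn v) else 0) = 0 := by
            intro n hn v
            rw [if_neg]
            rintro ⟨-, h2⟩
            rw [Finset.mem_Icc] at hn
            omega
          rw [Finset.sum_congr rfl fun n hn => Finset.sum_eq_zero fun v _ => hzero n hn v,
            Finset.sum_const_zero, hSB, if_pos (Or.inr (by omega))]
          simp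
        · have hA := ih (pre ++ [c]) (by omega)
            (by simp [List.mem_append]; tauto)
            (by simp; omega)
          simp only [List.length_append, List.length_singleton] at hA
          rw [hA, hSB, if_neg (by push_neg; exact ⟨hc, by omega⟩), prefProb_append, add_zero]
    rw [Finset.sum_congr rfl fun c _ => main c, ← Finset.mul_sum, (hP pre).2, mul_one]

end Helpers3

section Helpers4

open Classical

variable {Ω : Type*} [Fintype Ω] [DecidableEq Ω] (eos : Ω)

lemma sum_fn_succ (m : ℕ) (g : List Ω → ℝ) :
    ∑ v : Fin (m+1) → Ω, g (List.ofFn v) = ∑ w : Fin m → Ω, ∑ c : Ω, g (List.ofFn w ++ [c]) := by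
  rw [← Equiv.sum_comp (Fin.snocEquiv (fun _ => Ω)) (fun v => g (List.ofFn v)),
    Fintype.sum_prod_type, Finset.sum_comm]
  refine Finset.sum_congr rfl fun w _ => Finset.sum_congr rfl fun c _ => ?_
  congr 1
  show List.ofFn (Fin.snoc w c : Fin (m+1) → Ω) = List.ofFn w ++ [c]
  rw [List.ofFn_succ']
  simp [Fin.snoc_castSucc, Fin.snoc_last, List.concat_eq_append]

lemma ofFn_concat_take {m : ℕ} (w : Fin m → Ω) (c : Ω) :
    (List.ofFn w ++ [c]).take m = List.ofFn w := by
  rw [List.take_append_of_le_length (by simp), List.take_of_length_le (by simp)]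

lemma ofFn_concat_getD {m : ℕ} (w : Fin m → Ω) (c : Ω) :
    (List.ofFn w ++ [c]).getD m eos = c := by
  rw [List.getD_eq_getElem?_getD, List.getElem?_append_right (by simp)]
  simp

lemma seqProb_concat_general (ms : ℕ → List Ω → Ω → ℝ) (w : List Ω) (c : Ω) :
    seqProb eos ms (w.length + 1) (w ++ [c])
      = if eos ∉ w
          then (∏ s ∈ Finset.range w.length, ms s (w.take s) (w.getD s eos)) * ms w.length w c
          else 0 := by
  have hst : Stopped eos (w.length + 1) (w ++ [c]) ↔ eos ∉ w := by
    unfold Stopped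
    simp [List.dropLast_concat, List.getLast?_concat]
  simp only [seqProb]
  rw [if_congr hst rfl rfl]
  by_cases h : eos ∉ w
  · rw [if_pos h, if_pos h, List.length_append, List.length_singleton,
      Finset.prod_range_succ]
    congr 1
    · refine Finset.prod_congr rfl fun s hs => ?_
      rw [Finset.mem_range] at hs
      have hpre : w <+: w ++ [c] := ⟨[c], rfl⟩
      rw [take_eq_of_prefix hpre hs.le, getD_eq_of_prefix hpre hs]
    · congr 1
      · rw [List.take_append_of_le_length le_rfl, List.take_length]
      · rw [List.getD_eq_getElem?_getD, List.getElem?_append_right le_rfl]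
        simp
  · rw [if_neg h, if_neg h]

/-- `mixExp` with a test function vanishing off length `t` collapses to the length-`t` sum. -/
lemma seqExp_vanish (ms : ℕ → List Ω → Ω → ℝ) {t : ℕ} (ht : 1 ≤ t) (δ : List Ω → ℝ)
    (hδ0 : ∀ y : List Ω, y.length ≠ t → δ y = 0) :
    seqExp eos ms t δ = ∑ v : Fin t → Ω, seqProb eos ms t (List.ofFn v) * δ (List.ofFn v) := by
  unfold seqExp
  rw [Finset.sum_eq_single_of_mem t (Finset.mem_Icc.2 ⟨ht, le_rfl⟩)]
  intro n _ hn
  refine Finset.sum_eq_zero fun v _ => ?_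
  rw [hδ0 _ (by simpa using hn), mul_zero]

/-- The explicit formula for `Aterm`. -/
lemma Aterm_formula {ι : Type*} (p q : ι → List Ω → Ω → ℝ) (hp : IsModel p) (x : ι)
    (T t : ℕ) (ht1 : 1 ≤ t) (ht2 : t ≤ T) :
    Aterm eos p q x T t = ∑ w : Fin (t-1) → Ω,
      (if eos ∉ List.ofFn w
        then prefProb eos (p x) (List.ofFn w) * tvd (p x (List.ofFn w)) (q x (List.ofFn w))
        else 0) := by
  unfold Aterm modelExp seqExp
  have step1 : ∀ n : ℕ, ∀ v : Fin n → Ω,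
      seqProb eos (fun _ pre => p x pre) T (List.ofFn v) * stepLoss p q x t (List.ofFn v)
      = ∑ w : Fin (t-1) → Ω,
          (if List.ofFn w <+: List.ofFn v ∧ t - 1 < n
            then seqProb eos (fun _ pre => p x pre) T (List.ofFn v)
              * tvd (p x (List.ofFn w)) (q x (List.ofFn w)) else 0) := by
    intro n v
    set y := List.ofFn v with hy
    have hylen : y.length = n := by simp [hy]
    by_cases h : t ≤ n
    · have hw0 : ∃ w₀ : Fin (t-1) → Ω, List.ofFn w₀ = y.take (t-1) := by
        refine ⟨fun i => y[(i : ℕ)]'(by omega), ?_⟩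
        apply List.ext_getElem (by simp [hylen]; omega)
        intro i h1 h2
        simp [List.getElem_take]
      obtain ⟨w₀, hw₀⟩ := hw0
      have huniq : ∀ w : Fin (t-1) → Ω, List.ofFn w <+: y → w = w₀ := by
        intro w hw
        refine List.ofFn_injective ?_
        rw [hw₀]
        have := List.prefix_iff_eq_take.1 hw
        simpa using this
      rw [Finset.sum_eq_single_of_mem w₀ (Finset.mem_univ _)]
      · rw [if_pos ⟨hw₀ ▸ List.take_prefix _ _, by omega⟩, hw₀]
        unfold stepLoss
        rw [if_pos (hylen ▸ h)]
      · intro w _ hwne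
        rw [if_neg]
        rintro ⟨h1, -⟩
        exact hwne (huniq w h1)
    · unfold stepLoss
      rw [if_neg (by omega : ¬ t ≤ y.length), mul_zero]
      symm
      refine Finset.sum_eq_zero fun w _ => ?_
      rw [if_neg]
      rintro ⟨-, h2⟩
      omega
  rw [Finset.sum_congr rfl fun n _ => Finset.sum_congr rfl fun v _ => step1 n v,
    Finset.sum_congr rfl fun n _ => Finset.sum_comm, Finset.sum_comm]
  refine Finset.sum_congr rfl fun w _ => ?_
  have hpull : ∀ n : ℕ, ∀ v : Fin n → Ω,
      (if List.ofFn w <+: List.ofFn v ∧ t - 1 < n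
        then seqProb eos (fun _ pre => p x pre) T (List.ofFn v)
          * tvd (p x (List.ofFn w)) (q x (List.ofFn w)) else 0)
      = (if List.ofFn w <+: List.ofFn v ∧ (List.ofFn w).length < n
        then seqProb eos (fun _ pre => p x pre) T (List.ofFn v) else 0)
          * tvd (p x (List.ofFn w)) (q x (List.ofFn w)) := by
    intro n v
    rw [List.length_ofFn]
    by_cases h : List.ofFn w <+: List.ofFn v ∧ t - 1 < n
    · rw [if_pos h, if_pos h]
    · rw [if_neg h, if_neg h, zero_mul]
  rw [Finset.sum_congr rfl fun n _ => Finset.sum_congr rfl fun v _ => hpull n v,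
    Finset.sum_congr rfl fun n _ => (Finset.sum_mul _ _ _).symm, ← Finset.sum_mul]
  by_cases hw : eos ∉ List.ofFn w
  · rw [if_pos hw, mass_lemma eos (p x) (hp x) T (T - (t - 1)) (List.ofFn w)
      (by omega) hw (by simp; omega)]
  · rw [if_neg hw]
    push_neg at hw
    rw [Finset.sum_congr rfl fun n _ => Finset.sum_eq_zero fun v _ =>
      strict_ext_zero eos (p x) T (l := List.ofFn w) hw n v]
    simp

end Helpers4

/-- **DistillSpec, Lemma 3 (variational form of `A_t`).** For `1 ≤ t ≤ T`,
`A_t(x) = sup_{δ : Ω^t → [−1/2,1/2]} { E_{y∼M(x,∅,Pᵗ)}[δ(y)] − E_{y∼M(x,∅,P^{t−1}Q)}[δ(y)] }`,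
where `δ` is extended by `0` to sequences of length `≠ t`. -/
theorem Aterm_variational
    {Ω ι : Type*} [Fintype Ω] [DecidableEq Ω] (eos : Ω)
    (T : ℕ) (hT : 1 ≤ T)
    (p q : ι → List Ω → Ω → ℝ) (hp : IsModel p) (hq : IsModel q)
    (x : ι) (t : ℕ) (ht1 : 1 ≤ t) (ht2 : t ≤ T) :
    Aterm eos p q x T t = sSup { r : ℝ | ∃ δ : List Ω → ℝ,
      (∀ y, δ y ∈ Set.Icc (-(1 / 2) : ℝ) (1 / 2)) ∧
      (∀ y : List Ω, y.length ≠ t → δ y = 0) ∧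
      r = mixExp eos p q x (List.replicate t true) δ
        - mixExp eos p q x (List.replicate (t - 1) true ++ [false]) δ } := by
  classical
  obtain ⟨m, rfl⟩ : ∃ m, t = m + 1 := ⟨t - 1, by omega⟩
  simp only [Nat.add_sub_cancel]
  set z₂ : List Bool := List.replicate m true ++ [false] with hz₂def
  set ms₂ : ℕ → List Ω → Ω → ℝ :=
    fun s pre => if z₂.getD s true then p x pre else q x pre with hms₂def
  set sp1 : List Ω → ℝ := seqProb eos (fun _ pre => p x pre) (m+1) with hsp1def
  set sp2 : List Ω → ℝ := seqProb eos ms₂ (m+1) with hsp2def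
  have hz₁getD : ∀ s : ℕ, (List.replicate (m+1) true).getD s true = true := by
    intro s
    rcases lt_or_ge s (m+1) with h | h
    · simp [List.getD_eq_getElem?_getD, List.getElem?_replicate, h]
    · have hn : (List.replicate (m+1) true)[s]? = none :=
        List.getElem?_eq_none (by simpa using h)
      rw [List.getD_eq_getElem?_getD, hn]
      rfl
  have hz₂lt : ∀ s : ℕ, s < m → z₂.getD s true = true := by
    intro s hs
    rw [hz₂def, List.getD_eq_getElem?_getD, List.getElem?_append_left (by simpa using hs),
      List.getElem?_replicate, if_pos hs]
    rfl
  have hz₂eq : z₂.getD m true = false := by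
    rw [hz₂def, List.getD_eq_getElem?_getD, List.getElem?_append_right (by simp)]
    simp
  have hms₂lt : ∀ s, s < m → ∀ pre, ms₂ s pre = p x pre := by
    intro s hs pre
    show (if z₂.getD s true = true then p x pre else q x pre) = p x pre
    rw [hz₂lt s hs]
    simp
  have hms₂m : ∀ pre, ms₂ m pre = q x pre := by
    intro pre
    show (if z₂.getD m true = true then p x pre else q x pre) = q x pre
    rw [hz₂eq]
    simp
  -- difference of mixed expectations, for vanishing δ
  have hmix : ∀ δ : List Ω → ℝ, (∀ y : List Ω, y.length ≠ m+1 → δ y = 0) →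
      mixExp eos p q x (List.replicate (m+1) true) δ - mixExp eos p q x z₂ δ
      = ∑ v : Fin (m+1) → Ω, (sp1 (List.ofFn v) - sp2 (List.ofFn v)) * δ (List.ofFn v) := by
    intro δ hδ
    unfold mixExp
    have hl₁ : (List.replicate (m+1) true).length = m+1 := by simp
    have hl₂ : z₂.length = m+1 := by simp [hz₂def]
    rw [hl₁, hl₂, seqExp_vanish eos _ (by omega) δ hδ, seqExp_vanish eos _ (by omega) δ hδ,
      ← Finset.sum_sub_distrib]
    refine Finset.sum_congr rfl fun v _ => ?_
    rw [← sub_mul]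
    congr 2
    rw [hsp1def]
    congr 1
    funext s pre
    rw [hz₁getD s]
    simp
  -- value of the density difference on length-(m+1) sequences
  have hDval : ∀ (w : Fin m → Ω) (c : Ω),
      sp1 (List.ofFn w ++ [c]) - sp2 (List.ofFn w ++ [c])
      = if eos ∉ List.ofFn w
          then prefProb eos (p x) (List.ofFn w) * (p x (List.ofFn w) c - q x (List.ofFn w) c)
          else 0 := by
    intro w c
    have h1 := seqProb_concat_general eos (fun _ pre => p x pre) (List.ofFn w) c
    have h2 := seqProb_concat_general eos ms₂ (List.ofFn w) c
    simp only [List.length_ofFn] at h1 h2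
    have hprodpre : ∀ ms : ℕ → List Ω → Ω → ℝ, (∀ s, s < m → ms s = p x) →
        ∏ s ∈ Finset.range m, ms s ((List.ofFn w).take s) ((List.ofFn w).getD s eos)
        = prefProb eos (p x) (List.ofFn w) := by
      intro ms hms
      rw [prefProb, List.length_ofFn]
      exact Finset.prod_congr rfl fun s hs => by
        rw [hms s (Finset.mem_range.1 hs)]
    rw [hsp1def, hsp2def, h1, h2,
      hprodpre _ (fun s hs => rfl),
      hprodpre ms₂ (fun s hs => funext fun pre => hms₂lt s hs pre),
      show ms₂ m (List.ofFn w) c = q x (List.ofFn w) c from congrFun (hms₂m (List.ofFn w)) c]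
    by_cases hw : eos ∉ List.ofFn w
    · rw [if_pos hw, if_pos hw, if_pos hw, ← mul_sub]
    · rw [if_neg hw, if_neg hw, if_neg hw, sub_zero]
  -- the half-sum of absolute differences equals the Aterm formula
  have h0pre : ∀ w : Fin m → Ω, 0 ≤ prefProb eos (p x) (List.ofFn w) :=
    fun w => prefProb_nonneg eos (fun pre c => (hp x pre).1 c) _
  have hhalf : (1/2 : ℝ) * ∑ v : Fin (m+1) → Ω, |sp1 (List.ofFn v) - sp2 (List.ofFn v)|
      = ∑ w : Fin m → Ω,
        (if eos ∉ List.ofFn w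
          then prefProb eos (p x) (List.ofFn w)
            * tvd (p x (List.ofFn w)) (q x (List.ofFn w))
          else 0) := by
    rw [sum_fn_succ m (fun y => |sp1 y - sp2 y|), Finset.mul_sum]
    refine Finset.sum_congr rfl fun w _ => ?_
    rw [Finset.sum_congr rfl fun c _ => congrArg abs (hDval w c)]
    by_cases hw : eos ∉ List.ofFn w
    · simp only [if_pos hw]
      rw [Finset.sum_congr rfl fun c _ => by
          rw [abs_mul, abs_of_nonneg (h0pre w)], ← Finset.mul_sum, tvd]
      ring
    · simp only [if_neg hw]
      simp
  -- upper bound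
  set V : ℝ := (1/2 : ℝ) * ∑ v : Fin (m+1) → Ω, |sp1 (List.ofFn v) - sp2 (List.ofFn v)|
    with hVdef
  have hub : ∀ r ∈ { r : ℝ | ∃ δ : List Ω → ℝ,
      (∀ y, δ y ∈ Set.Icc (-(1 / 2) : ℝ) (1 / 2)) ∧
      (∀ y : List Ω, y.length ≠ m+1 → δ y = 0) ∧
      r = mixExp eos p q x (List.replicate (m+1) true) δ - mixExp eos p q x z₂ δ }, r ≤ V := by
    rintro r ⟨δ, hb, hv, rfl⟩
    rw [hmix δ hv, hVdef, Finset.mul_sum]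
    refine Finset.sum_le_sum fun v _ => ?_
    have hδb : |δ (List.ofFn v)| ≤ 1/2 := abs_le.2 ⟨(hb _).1, (hb _).2⟩
    calc (sp1 (List.ofFn v) - sp2 (List.ofFn v)) * δ (List.ofFn v)
        ≤ |(sp1 (List.ofFn v) - sp2 (List.ofFn v)) * δ (List.ofFn v)| := le_abs_self _
      _ = |sp1 (List.ofFn v) - sp2 (List.ofFn v)| * |δ (List.ofFn v)| := abs_mul _ _
      _ ≤ |sp1 (List.ofFn v) - sp2 (List.ofFn v)| * (1/2) :=
          mul_le_mul_of_nonneg_left hδb (abs_nonneg _)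
      _ = 1/2 * |sp1 (List.ofFn v) - sp2 (List.ofFn v)| := mul_comm _ _
  -- the optimal δ attains the bound
  have hmem : V ∈ { r : ℝ | ∃ δ : List Ω → ℝ,
      (∀ y, δ y ∈ Set.Icc (-(1 / 2) : ℝ) (1 / 2)) ∧
      (∀ y : List Ω, y.length ≠ m+1 → δ y = 0) ∧
      r = mixExp eos p q x (List.replicate (m+1) true) δ - mixExp eos p q x z₂ δ } := by
    refine ⟨fun y => if y.length = m+1 then (if 0 ≤ sp1 y - sp2 y then (1/2 : ℝ) else -(1/2)) else 0,
      ?_, ?_, ?_⟩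
    · intro y
      dsimp only
      split_ifs <;> constructor <;> norm_num
    · intro y hy
      dsimp only
      rw [if_neg hy]
    · rw [hmix _ (fun y hy => by rw [if_neg hy]), hVdef, Finset.mul_sum]
      refine (Finset.sum_congr rfl fun v _ => ?_).symm
      rw [if_pos (by simp)]
      rcases le_or_gt 0 (sp1 (List.ofFn v) - sp2 (List.ofFn v)) with h | h
      · rw [if_pos h, abs_of_nonneg h]
        ring
      · rw [if_neg (not_le.2 h), abs_of_neg h]
        ring
  rw [Aterm_formula eos p q hp x T (m+1) (by omega) ht2]
  have hAB : (∑ w : Fin (m+1-1) → Ω,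
      (if eos ∉ List.ofFn w
        then prefProb eos (p x) (List.ofFn w)
          * tvd (p x (List.ofFn w)) (q x (List.ofFn w))
        else 0)) = V := hhalf.symm
  rw [hAB]
  exact (le_antisymm (csSup_le ⟨V, hmem⟩ hub) (le_csSup ⟨V, hub⟩ hmem)).symm
end

section
/- With Ω, T, p, q as above and the mixed-model sequence distributions M(x, y, z) for strings z over the alphabet {P, Q}, for every input x and every 1 ≤ t ≤ T: E_t(x) = sup over all functions δ : Ω^t → [−1/2, 1/2] (extended by δ(y) = 0 for sequences y of length ≠ t) of { E_{y∼M(x, ∅, Q^{t−1}P)}[δ(y)] − E_{y∼M(x, ∅, Q^t)}[δ(y)] }, where E_t(x) = E_{y∼q_{≤T}(·|x)}[ 1{t ≤ |y|} · D_TVD(p(·|x,y_{<t}), q(·|x,y_{<t})) ]. -/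
open Finset

/-!
Under the draft model, the first `t - 1` tokens form an `eos`-free prefix `w` with probability
`π(w)` (`prefixProb`); summing out all later tokens (each next-token distribution of `q` has
mass one) gives `E_t = Σ_w π(w) · TVD(p(·|w), q(·|w))`. The mixed models `Q^{t-1}P` and `Qᵗ` share
this prefix law and differ only in the law of the `t`-th token, so for `δ` supported on length `t`
the difference of their expectations is `Σ_w π(w) Σ_c (p(c|w) - q(c|w)) δ(w c)`. As `π ≥ 0`, each
inner sum is at most `TVD(p(·|w), q(·|w))` when `|δ| ≤ 1/2`, with equality when `δ(w c) = ±1/2`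
follows the sign of `p(c|w) - q(c|w)`.
-/

section TotalVariation

variable {Ω : Type*} [Fintype Ω]

theorem sum_sub_mul_le_tvd (P Q δ : Ω → ℝ) (hδ : ∀ c, δ c ∈ Set.Icc (-(1 / 2) : ℝ) (1 / 2)) :
    ∑ c, (P c - Q c) * δ c ≤ tvd P Q := by
  rw [tvd, mul_sum]
  refine sum_le_sum fun c _ => ?_
  have hδc : |δ c| ≤ 1 / 2 := abs_le.2 (hδ c)
  calc (P c - Q c) * δ c ≤ |P c - Q c| * |δ c| := by rw [← abs_mul]; exact le_abs_self _
    _ ≤ 1 / 2 * |P c - Q c| := by nlinarith [abs_nonneg (P c - Q c)]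

theorem sum_sub_mul_sign_eq_tvd (P Q : Ω → ℝ) :
    ∑ c, (P c - Q c) * (if Q c ≤ P c then 1 / 2 else -(1 / 2)) = tvd P Q := by
  rw [tvd, mul_sum]
  refine sum_congr rfl fun c _ => ?_
  split_ifs with h
  · rw [abs_of_nonneg (sub_nonneg.2 h)]; ring
  · rw [abs_of_neg (sub_neg.2 (not_le.1 h))]; ring

end TotalVariation

theorem Fintype.sum_pi_fin_succ_snoc {α M : Type*} [Fintype α] [AddCommMonoid M] {m : ℕ}
    (F : (Fin (m + 1) → α) → M) :
    ∑ v, F v = ∑ w : Fin m → α, ∑ c, F (Fin.snoc w c) := by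
  rw [← (Fin.snocEquiv fun _ => α).sum_comp F, Fintype.sum_prod_type, sum_comm]
  rfl

theorem List.ofFn_snoc {α : Type*} {m : ℕ} (w : Fin m → α) (c : α) :
    List.ofFn (Fin.snoc w c) = List.ofFn w ++ [c] := by
  rw [List.ofFn_succ_last]
  simp

section Sampling

variable {Ω : Type*} (eos : Ω)

theorem prod_range_take_getD_append_singleton (ms : ℕ → List Ω → Ω → ℝ) (u : List Ω) (c : Ω) :
    ∏ s ∈ range (u ++ [c]).length, ms s ((u ++ [c]).take s) ((u ++ [c]).getD s eos)
      = (∏ s ∈ range u.length, ms s (u.take s) (u.getD s eos)) * ms u.length u c := by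
  rw [List.length_append, List.length_singleton, prod_range_succ]
  congr 1
  · refine prod_congr rfl fun s hs => ?_
    have hs : s < u.length := mem_range.1 hs
    rw [List.take_append_of_le_length hs.le, List.getD_append _ _ _ _ hs]
  · rw [List.take_left, List.getD_append_right _ _ _ _ le_rfl]
    simp

variable [DecidableEq Ω]

def prefixProb (ms : ℕ → List Ω → Ω → ℝ) (u : List Ω) : ℝ :=
  if eos ∉ u then ∏ s ∈ range u.length, ms s (u.take s) (u.getD s eos) else 0

theorem prefixProb_nonneg {ms : ℕ → List Ω → Ω → ℝ} (hms : ∀ s u c, 0 ≤ ms s u c)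
    (u : List Ω) : 0 ≤ prefixProb eos ms u := by
  unfold prefixProb
  split
  · exact prod_nonneg fun s _ => hms _ _ _
  · exact le_rfl

theorem prefixProb_congr {ms ms' : ℕ → List Ω → Ω → ℝ} {u : List Ω}
    (h : ∀ s < u.length, ms s (u.take s) = ms' s (u.take s)) :
    prefixProb eos ms u = prefixProb eos ms' u := by
  unfold prefixProb
  split
  · exact prod_congr rfl fun s hs => by rw [h s (mem_range.1 hs)]
  · rfl

theorem prefixProb_append_singleton (ms : ℕ → List Ω → Ω → ℝ) (u : List Ω) (c : Ω) :
    prefixProb eos ms (u ++ [c])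
      = if c = eos then 0 else prefixProb eos ms u * ms u.length u c := by
  unfold prefixProb
  by_cases hc : c = eos
  · simp [hc]
  · by_cases hu : eos ∈ u
    · simp [hu, hc]
    · have hne : eos ∉ u ++ [c] := by simp [hu, Ne.symm hc]
      rw [if_pos hne, if_neg hc, if_pos hu, prod_range_take_getD_append_singleton]

theorem stopped_append_singleton_iff (T : ℕ) (u : List Ω) (c : Ω) :
    Stopped eos T (u ++ [c]) ↔ eos ∉ u ∧ u.length + 1 ≤ T ∧ (c = eos ∨ u.length + 1 = T) := by
  simp only [Stopped, List.dropLast_concat, List.getLast?_concat, List.length_append,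
    List.length_singleton, Option.some_inj, ne_eq, List.append_eq_nil_iff, List.cons_ne_nil,
    and_false, not_false_eq_true, true_and]
  tauto

variable [Fintype Ω]

theorem seqProb_append_singleton (ms : ℕ → List Ω → Ω → ℝ) (T : ℕ) (u : List Ω) (c : Ω) :
    seqProb eos ms T (u ++ [c]) =
      if u.length + 1 ≤ T ∧ (c = eos ∨ u.length + 1 = T)
      then prefixProb eos ms u * ms u.length u c else 0 := by
  unfold seqProb prefixProb
  by_cases hu : eos ∈ u
  · simp [stopped_append_singleton_iff, hu]
  · simp only [stopped_append_singleton_iff, hu, not_false_eq_true, true_and, if_true,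
      prod_range_take_getD_append_singleton]

theorem seqProb_append_singleton_of_length_eq (ms : ℕ → List Ω → Ω → ℝ) {T : ℕ} {u : List Ω}
    (hT : u.length + 1 = T) (c : Ω) :
    seqProb eos ms T (u ++ [c]) = prefixProb eos ms u * ms u.length u c := by
  rw [seqProb_append_singleton, if_pos ⟨hT.le, Or.inr hT⟩]

theorem seqProb_add_prefixProb_append_singleton (ms : ℕ → List Ω → Ω → ℝ) {T : ℕ} {u : List Ω}
    (hT : u.length + 1 < T) (c : Ω) :
    seqProb eos ms T (u ++ [c]) + prefixProb eos ms (u ++ [c])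
      = prefixProb eos ms u * ms u.length u c := by
  rw [seqProb_append_singleton, prefixProb_append_singleton]
  by_cases hc : c = eos
  · rw [if_pos ⟨hT.le, Or.inl hc⟩, if_pos hc, add_zero]
  · rw [if_neg fun h => h.2.elim hc (by omega), if_neg hc, zero_add]

end Sampling

section SequenceExpectation

variable {Ω : Type*} [Fintype Ω] [DecidableEq Ω] (eos : Ω) (ms : ℕ → List Ω → Ω → ℝ)

theorem seqExp_add (T : ℕ) (f g : List Ω → ℝ) :
    seqExp eos ms T (fun y => f y + g y) = seqExp eos ms T f + seqExp eos ms T g := by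
  simp only [seqExp, mul_add, sum_add_distrib]

theorem seqExp_eq_zero_of_length_le {T : ℕ} {f : List Ω → ℝ}
    (hf : ∀ y : List Ω, y.length ≤ T → f y = 0) : seqExp eos ms T f = 0 := by
  refine sum_eq_zero fun n hn => sum_eq_zero fun v _ => ?_
  rw [hf _ (by simpa using (mem_Icc.1 hn).2), mul_zero]

theorem seqExp_of_length_eq {T m : ℕ} (hmT : m + 1 ≤ T) {f : List Ω → ℝ}
    (hf : ∀ y : List Ω, y.length ≠ m + 1 → f y = 0) :
    seqExp eos ms T f = ∑ w : Fin m → Ω, ∑ c,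
      seqProb eos ms T (List.ofFn w ++ [c]) * f (List.ofFn w ++ [c]) := by
  unfold seqExp
  rw [sum_eq_single_of_mem (m + 1) (mem_Icc.2 ⟨by omega, hmT⟩), Fintype.sum_pi_fin_succ_snoc]
  · simp only [List.ofFn_snoc]
  · intro n _ hn
    refine sum_eq_zero fun v _ => ?_
    rw [hf _ (by simpa using hn), mul_zero]

end SequenceExpectation

section Marginal

variable {Ω : Type*} [Fintype Ω] [DecidableEq Ω] (eos : Ω) {ms : ℕ → List Ω → Ω → ℝ}

/-- The second summand is written with `take (m + 1)` so that it has the shape of the left-hand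
side at `m + 1`, ready for induction. -/
theorem seqExp_take_split {T m : ℕ} (hmT : m + 1 ≤ T) (h : List Ω → ℝ) :
    seqExp eos ms T (fun y => if m + 1 ≤ y.length then h (y.take m) else 0)
      = ∑ w : Fin m → Ω, (∑ c, seqProb eos ms T (List.ofFn w ++ [c])) * h (List.ofFn w)
        + seqExp eos ms T
            (fun y => if m + 1 + 1 ≤ y.length then h ((y.take (m + 1)).take m) else 0) := by
  have hsplit : (fun y : List Ω => if m + 1 ≤ y.length then h (y.take m) else 0)
      = fun y => (if y.length = m + 1 then h (y.take m) else 0)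
        + if m + 1 + 1 ≤ y.length then h ((y.take (m + 1)).take m) else 0 := by
    funext y
    rw [List.take_take, min_eq_left (Nat.le_succ m)]
    split_ifs <;> first | omega | ring
  rw [hsplit, seqExp_add, seqExp_of_length_eq eos ms hmT fun y hy => if_neg hy]
  congr 1
  refine sum_congr rfl fun w _ => ?_
  rw [sum_mul]
  refine sum_congr rfl fun c _ => ?_
  rw [if_pos (by simp), List.take_left' List.length_ofFn]

theorem seqExp_take_eq_sum_prefixProb (hms : ∀ s u, IsDist (ms s u)) {T m : ℕ}
    (hmT : m + 1 ≤ T) (h : List Ω → ℝ) :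
    seqExp eos ms T (fun y => if m + 1 ≤ y.length then h (y.take m) else 0)
      = ∑ w : Fin m → Ω, prefixProb eos ms (List.ofFn w) * h (List.ofFn w) := by
  obtain ⟨d, rfl⟩ : ∃ d, T = m + 1 + d := ⟨T - (m + 1), by omega⟩
  clear hmT
  induction d generalizing m h with
  | zero =>
    rw [seqExp_take_split eos le_rfl, seqExp_eq_zero_of_length_le eos ms
      fun y hy => if_neg (by omega), add_zero]
    refine sum_congr rfl fun w _ => ?_
    have hu : (List.ofFn w).length + 1 = m + 1 + 0 := by simp
    simp only [seqProb_append_singleton_of_length_eq eos ms hu, ← mul_sum, (hms _ _).2, mul_one]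
  | succ d ih =>
    rw [seqExp_take_split eos (by omega), show m + 1 + (d + 1) = m + 1 + 1 + d by omega,
      ih (fun u => h (u.take m)), Fintype.sum_pi_fin_succ_snoc, ← sum_add_distrib]
    refine sum_congr rfl fun w _ => ?_
    have hu : (List.ofFn w).length + 1 < m + 1 + 1 + d := by simp; omega
    simp only [List.ofFn_snoc, List.take_left' List.length_ofFn, ← sum_mul, ← add_mul,
      ← sum_add_distrib, seqProb_add_prefixProb_append_singleton eos ms hu, ← mul_sum,
      (hms _ _).2, mul_one]

end Marginal

section MixedModels

variable {Ω ι : Type*} [Fintype Ω] [DecidableEq Ω] (eos : Ω) (p q : ι → List Ω → Ω → ℝ) (x : ι)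

theorem Eterm_eq_sum_prefixProb_mul_tvd (hq : IsModel q) {T m : ℕ} (hmT : m + 1 ≤ T) :
    Eterm eos p q x T (m + 1)
      = ∑ w : Fin m → Ω, prefixProb eos (fun _ pre => q x pre) (List.ofFn w)
          * tvd (p x (List.ofFn w)) (q x (List.ofFn w)) :=
  seqExp_take_eq_sum_prefixProb eos (fun _ => hq x) hmT fun u => tvd (p x u) (q x u)

theorem mixExp_replicate_append_singleton (m : ℕ) (b : Bool) {δ : List Ω → ℝ}
    (hδ : ∀ y : List Ω, y.length ≠ m + 1 → δ y = 0) :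
    mixExp eos p q x (List.replicate m false ++ [b]) δ
      = ∑ w : Fin m → Ω, prefixProb eos (fun _ pre => q x pre) (List.ofFn w)
          * ∑ c, (if b then p x (List.ofFn w) c else q x (List.ofFn w) c)
              * δ (List.ofFn w ++ [c]) := by
  unfold mixExp
  rw [List.length_append, List.length_replicate, List.length_singleton,
    seqExp_of_length_eq eos _ le_rfl hδ]
  refine sum_congr rfl fun w _ => ?_
  have hu : (List.ofFn w).length = m := List.length_ofFn
  rw [mul_sum]
  refine sum_congr rfl fun c _ => ?_
  rw [seqProb_append_singleton_of_length_eq eos _ (by rw [hu]), hu, mul_assoc]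
  congr 1
  · refine prefixProb_congr eos fun s hs => ?_
    have hs : s < m := hu ▸ hs
    rw [List.getD_append _ _ _ _ (by simpa using hs), List.getD_eq_getElem?_getD,
      List.getElem?_replicate_of_lt hs]
    rfl
  · rw [List.getD_append_right _ _ _ _ (by simp)]
    cases b <;> simp

theorem mixExp_sub_eq_sum_prefixProb {m : ℕ} {δ : List Ω → ℝ}
    (hδ : ∀ y : List Ω, y.length ≠ m + 1 → δ y = 0) :
    mixExp eos p q x (List.replicate m false ++ [true]) δ
        - mixExp eos p q x (List.replicate (m + 1) false) δ
      = ∑ w : Fin m → Ω, prefixProb eos (fun _ pre => q x pre) (List.ofFn w)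
          * ∑ c, (p x (List.ofFn w) c - q x (List.ofFn w) c) * δ (List.ofFn w ++ [c]) := by
  rw [List.replicate_succ', mixExp_replicate_append_singleton eos p q x m true hδ,
    mixExp_replicate_append_singleton eos p q x m false hδ, ← sum_sub_distrib]
  simp only [Bool.false_eq_true, if_true, if_false, ← mul_sub, ← sum_sub_distrib, ← sub_mul]

end MixedModels

theorem Eterm_variational_general
    {Ω ι : Type*} [Fintype Ω] [DecidableEq Ω] (eos : Ω)
    (T : ℕ)
    (p q : ι → List Ω → Ω → ℝ) (hq : IsModel q)
    (x : ι) (t : ℕ) (ht1 : 1 ≤ t) (ht2 : t ≤ T) :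
    Eterm eos p q x T t = sSup { r : ℝ | ∃ δ : List Ω → ℝ,
      (∀ y, δ y ∈ Set.Icc (-(1 / 2) : ℝ) (1 / 2)) ∧
      (∀ y : List Ω, y.length ≠ t → δ y = 0) ∧
      r = mixExp eos p q x (List.replicate (t - 1) false ++ [true]) δ
        - mixExp eos p q x (List.replicate t false) δ } := by
  obtain ⟨m, rfl⟩ : ∃ m, t = m + 1 := ⟨t - 1, by omega⟩
  rw [Eterm_eq_sum_prefixProb_mul_tvd eos p q x hq ht2, Nat.add_sub_cancel]
  refine (IsGreatest.csSup_eq ⟨?_, ?_⟩).symm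
  · let sign (y : List Ω) : ℝ :=
      if q x y.dropLast (y.getLastD eos) ≤ p x y.dropLast (y.getLastD eos) then 1 / 2 else -(1 / 2)
    refine ⟨fun y => if y.length = m + 1 then sign y else 0, fun y => ?_, fun y hy => if_neg hy, ?_⟩
    · simp only [sign]
      split_ifs <;> norm_num
    · rw [mixExp_sub_eq_sum_prefixProb eos p q x fun y hy => if_neg hy]
      refine sum_congr rfl fun w _ => ?_
      simp only [sign, List.length_append, List.length_ofFn, List.length_singleton, if_true,
        List.dropLast_concat, List.getLastD_concat, sum_sub_mul_sign_eq_tvd]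
  · rintro r ⟨δ, hδ, hsupp, rfl⟩
    rw [mixExp_sub_eq_sum_prefixProb eos p q x hsupp]
    exact sum_le_sum fun w _ => mul_le_mul_of_nonneg_left (sum_sub_mul_le_tvd _ _ _ fun _ => hδ _)
      (prefixProb_nonneg eos (fun _ u c => (hq x u).1 c) _)

/-- **DistillSpec, Lemma 3 (variational form of `E_t`).** For `1 ≤ t ≤ T`,
`E_t(x) = sup_{δ : Ω^t → [−1/2,1/2]} { E_{y∼M(x,∅,Q^{t−1}P)}[δ(y)] − E_{y∼M(x,∅,Qᵗ)}[δ(y)] }`,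
where `δ` is extended by `0` to sequences of length `≠ t`. -/
theorem Eterm_variational
    {Ω ι : Type*} [Fintype Ω] [DecidableEq Ω] (eos : Ω)
    (T : ℕ) (hT : 1 ≤ T)
    (p q : ι → List Ω → Ω → ℝ) (hp : IsModel p) (hq : IsModel q)
    (x : ι) (t : ℕ) (ht1 : 1 ≤ t) (ht2 : t ≤ T) :
    Eterm eos p q x T t = sSup { r : ℝ | ∃ δ : List Ω → ℝ,
      (∀ y, δ y ∈ Set.Icc (-(1 / 2) : ℝ) (1 / 2)) ∧
      (∀ y : List Ω, y.length ≠ t → δ y = 0) ∧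
      r = mixExp eos p q x (List.replicate (t - 1) false ++ [true]) δ
        - mixExp eos p q x (List.replicate t false) δ } :=
  Eterm_variational_general eos T p q hq x t ht1 ht2
end
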